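/- arXiv:2212.14487 — 10 statements merged into one kernel-verified Lean document; each statement's English description precedes it below -/
import Mathlib

section
/- Let m be an odd natural number. Then the product set Φ(m)·Φ(m) of primitive m-th roots of unity equals the set R(m) of all m-th roots of unity; i.e., every m-th root of unity in ℂ is a product of two primitive m-th roots of unity. -/
open scoped Pointwise

/-- The set of all complex `m`-th roots of unity. -/
def Rset (m : ℕ) : Set ℂ := {z : ℂ | z ^ m = 1}

/-- The set of primitive complex `m`-th roots of unity. -/
def Phi (m : ℕ) : Set ℂ := {z : ℂ | IsPrimitiveRoot z m}

lemma isUnit_pair {M N : Type*} [Monoid M] [Monoid N] {a : M} {b : N}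
    (ha : IsUnit a) (hb : IsUnit b) : IsUnit (a, b) := by
  obtain ⟨u, rfl⟩ := ha; obtain ⟨v, rfl⟩ := hb
  exact ⟨⟨((u : M), (v : N)), ((↑u⁻¹ : M), (↑v⁻¹ : N)), by simp, by simp⟩, rfl⟩

lemma isUnit_zmod_prime_pow_iff {p n : ℕ} (hp : p.Prime) (hn : 0 < n)
    (y : ZMod (p ^ n)) :
    IsUnit y ↔ (ZMod.castHom (dvd_pow_self p hn.ne') (ZMod p) y) ≠ 0 := by
  haveI : NeZero (p ^ n) := ⟨pow_ne_zero _ hp.pos.ne'⟩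
  obtain ⟨k, rfl⟩ : ∃ k : ℕ, (k : ZMod (p ^ n)) = y := ⟨y.val, ZMod.natCast_rightInverse y⟩
  rw [ZMod.isUnit_iff_coprime, Nat.coprime_pow_right_iff hn, Nat.coprime_comm,
    hp.coprime_iff_not_dvd, map_natCast, Ne, ZMod.natCast_eq_zero_iff]

lemma isUnit_two_zmod_prime_pow {p n : ℕ} (hp : p.Prime) (hn : 0 < n) (hpo : Odd p) :
    IsUnit (2 : ZMod (p ^ n)) := by
  have h2 : ((2 : ℕ) : ZMod (p ^ n)) = 2 := by push_cast; ring
  rw [← h2, ZMod.isUnit_iff_coprime]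
  exact (hpo.coprime_two_left).pow_right n

lemma pow_eq_pow_of_mod_eq {ζ : ℂ} {m : ℕ} (h : ζ ^ m = 1) {i j : ℕ}
    (hij : i % m = j % m) : ζ ^ i = ζ ^ j := by
  conv_lhs => rw [← Nat.div_add_mod i m]
  conv_rhs => rw [← Nat.div_add_mod j m]
  rw [pow_add, pow_add, pow_mul, pow_mul, h, one_pow, one_pow, hij]

lemma zmod_sum_two_units (n : ℕ) (hn : Odd n) (x : ZMod n) :
    ∃ a : ZMod n, IsUnit a ∧ IsUnit (x - a) := by
  induction n using Nat.recOnPosPrimePosCoprime with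
  | prime_pow p k hp hk =>
      have hp' : p.Prime := hp
      have hpo : Odd p := by
        rcases Nat.even_or_odd p with he | ho
        · exact absurd (Nat.even_pow.mpr ⟨he, hk.ne'⟩) (Nat.not_even_iff_odd.mpr hn)
        · exact ho
      haveI : Fact p.Prime := ⟨hp'⟩
      set f := ZMod.castHom (dvd_pow_self p hk.ne') (ZMod p) with hf
      have hf2 : f 2 = 2 := map_ofNat f 2
      by_cases h1 : f x = 1
      · refine ⟨2, isUnit_two_zmod_prime_pow hp' hk hpo, ?_⟩
        rw [isUnit_zmod_prime_pow_iff hp' hk, map_sub, h1, hf2]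
        intro h
        have h12 : ((1 : ℕ) : ZMod p) = ((2 : ℕ) : ZMod p) := by push_cast; linear_combination h
        rw [ZMod.natCast_eq_natCast_iff] at h12
        have hd : p ∣ 2 - 1 := (Nat.modEq_iff_dvd' (by norm_num)).mp h12
        simp only [Nat.dvd_one, show 2 - 1 = 1 from rfl] at hd
        exact hp'.one_lt.ne' hd
      · refine ⟨1, isUnit_one, ?_⟩
        rw [isUnit_zmod_prime_pow_iff hp' hk, map_sub, map_one, sub_ne_zero]
        exact h1
  | zero => exact absurd hn (by simp)
  | one => exact ⟨0, isUnit_of_subsingleton _, isUnit_of_subsingleton _⟩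
  | coprime a b ha hb hab iha ihb =>
      have hoa : Odd a := (Nat.odd_mul.mp hn).1
      have hob : Odd b := (Nat.odd_mul.mp hn).2
      let e := ZMod.chineseRemainder hab
      obtain ⟨u, hu1, hu2⟩ := iha hoa (e x).1
      obtain ⟨v, hv1, hv2⟩ := ihb hob (e x).2
      refine ⟨e.symm (u, v), ?_, ?_⟩
      · exact (isUnit_pair hu1 hv1).map (e.symm : ZMod a × ZMod b →+* ZMod (a * b))
      · have hx : x - e.symm (u, v) = e.symm ((e x).1 - u, (e x).2 - v) := by
          apply e.injective
          simp [Prod.ext_iff, map_sub]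
        rw [hx]
        exact (isUnit_pair hu2 hv2).map (e.symm : ZMod a × ZMod b →+* ZMod (a * b))

theorem phi_mul_phi_eq_R (m : ℕ) (hm : Odd m) (h1 : 1 ≤ m) :
    Phi m * Phi m = Rset m := by
  have hm0 : m ≠ 0 := by omega
  haveI : NeZero m := ⟨hm0⟩
  apply Set.Subset.antisymm
  · rintro z ⟨x, hx, y, hy, rfl⟩
    show (x * y) ^ m = 1
    rw [mul_pow, hx.pow_eq_one, hy.pow_eq_one, mul_one]
  · intro z hz
    have hζ : IsPrimitiveRoot (Complex.exp (2 * Real.pi * Complex.I / m)) m :=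
      Complex.isPrimitiveRoot_exp m hm0
    set ζ := Complex.exp (2 * Real.pi * Complex.I / m) with hzeta
    obtain ⟨k, _, rfl⟩ := hζ.eq_pow_of_pow_eq_one hz
    obtain ⟨a, ha, hb⟩ := zmod_sum_two_units m hm (k : ZMod m)
    have hac : (a.val).Coprime m := ZMod.val_coe_unit_coprime ha.unit
    have hbc : (((k : ZMod m) - a).val).Coprime m := ZMod.val_coe_unit_coprime hb.unit
    refine ⟨ζ ^ a.val, hζ.pow_of_coprime _ hac, ζ ^ ((k : ZMod m) - a).val,
      hζ.pow_of_coprime _ hbc, ?_⟩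
    show ζ ^ a.val * ζ ^ ((k : ZMod m) - a).val = ζ ^ k
    rw [← pow_add]
    have hmod : ((a.val + ((k : ZMod m) - a).val : ℕ) : ZMod m) = (k : ZMod m) := by
      push_cast
      rw [ZMod.natCast_val, ZMod.natCast_val]
      simp [ZMod.cast_id]
    rw [ZMod.natCast_eq_natCast_iff] at hmod
    exact pow_eq_pow_of_mod_eq hζ.pow_eq_one hmod
end

section
/- Let m₁, m₂ be odd natural numbers with gcd(m₁, m₂) > 1, and let M_i = R(m_i) \ {1} for i = 1, 2. Then M₁·M₂ = R(m₃), where m₃ = lcm(m₁, m₂). -/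
open scoped Pointwise

lemma coprime_lcm_div (m₁ m₂ : ℕ) (hm₁ : 0 < m₁) (hm₂ : 0 < m₂) :
    Nat.Coprime (Nat.lcm m₁ m₂ / m₁) (Nat.lcm m₁ m₂ / m₂) := by
  set L := Nat.lcm m₁ m₂ with hL
  have hL0 : 0 < L := Nat.pos_of_ne_zero (Nat.lcm_ne_zero hm₁.ne' hm₂.ne')
  have h1 : m₁ ∣ L := Nat.dvd_lcm_left _ _
  have h2 : m₂ ∣ L := Nat.dvd_lcm_right _ _
  set c := Nat.gcd (L / m₁) (L / m₂) with hc
  have hc1 : c ∣ L / m₁ := Nat.gcd_dvd_left _ _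
  have hc2 : c ∣ L / m₂ := Nat.gcd_dvd_right _ _
  have hm1c : m₁ * c ∣ L := by
    obtain ⟨e, he⟩ := hc1
    exact ⟨e, by rw [mul_assoc, ← he, Nat.mul_div_cancel' h1]⟩
  have hm2c : m₂ * c ∣ L := by
    obtain ⟨e, he⟩ := hc2
    exact ⟨e, by rw [mul_assoc, ← he, Nat.mul_div_cancel' h2]⟩
  have hc0 : 0 < c := by
    apply Nat.gcd_pos_of_pos_left
    exact Nat.div_pos (Nat.le_of_dvd hL0 h1) hm₁
  have hd1 : m₁ ∣ L / c := by
    obtain ⟨e, he⟩ := hm1c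
    exact ⟨e, by rw [he, mul_assoc, mul_comm c e, ← mul_assoc, Nat.mul_div_cancel _ hc0]⟩
  have hd2 : m₂ ∣ L / c := by
    obtain ⟨e, he⟩ := hm2c
    exact ⟨e, by rw [he, mul_assoc, mul_comm c e, ← mul_assoc, Nat.mul_div_cancel _ hc0]⟩
  have hLd : L ∣ L / c := Nat.lcm_dvd hd1 hd2
  have hcd : c ∣ L := dvd_trans hc1 (Nat.div_dvd_of_dvd h1)
  have hdvd : L / c ∣ L := Nat.div_dvd_of_dvd hcd
  have hEq : L / c = L := Nat.dvd_antisymm hdvd hLd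
  have hmul : L / c * c = L := Nat.div_mul_cancel hcd
  rw [hEq] at hmul
  have : c = 1 := by
    have : L * c = L * 1 := by rw [hmul, mul_one]
    exact Nat.eq_of_mul_eq_mul_left hL0 this
  exact this

theorem M1_mul_M2_eq_R_lcm (m₁ m₂ : ℕ) (h₁ : Odd m₁) (h₂ : Odd m₂)
    (hm₁ : 1 < m₁) (hm₂ : 1 < m₂) (hgcd : 1 < Nat.gcd m₁ m₂) :
    (Rset m₁ \ {1}) * (Rset m₂ \ {1}) = Rset (Nat.lcm m₁ m₂) := by
  set L := Nat.lcm m₁ m₂ with hLdef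
  have hm₁0 : 0 < m₁ := by omega
  have hm₂0 : 0 < m₂ := by omega
  have hL0 : 0 < L := Nat.pos_of_ne_zero (Nat.lcm_ne_zero hm₁0.ne' hm₂0.ne')
  have hd1 : m₁ ∣ L := Nat.dvd_lcm_left _ _
  have hd2 : m₂ ∣ L := Nat.dvd_lcm_right _ _
  ext z
  simp only [Set.mem_mul, Rset, Set.mem_diff, Set.mem_setOf_eq, Set.mem_singleton_iff]
  constructor
  · rintro ⟨x, ⟨hx, _⟩, y, ⟨hy, _⟩, rfl⟩
    rw [mul_pow]
    have hx' : x ^ L = 1 := by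
      rw [← Nat.div_mul_cancel hd1, mul_comm, pow_mul, hx, one_pow]
    have hy' : y ^ L = 1 := by
      rw [← Nat.div_mul_cancel hd2, mul_comm, pow_mul, hy, one_pow]
    rw [hx', hy', one_mul]
  · intro hz
    have hζ : IsPrimitiveRoot (Complex.exp (2 * Real.pi * Complex.I / L)) L :=
      Complex.isPrimitiveRoot_exp L hL0.ne'
    set ζ : ℂ := Complex.exp (2 * Real.pi * Complex.I / L) with hζdef
    have hζ0 : ζ ≠ 0 := by
      intro h
      have := hζ.pow_eq_one
      rw [h, zero_pow hL0.ne'] at this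
      exact zero_ne_one this
    haveI : NeZero L := ⟨hL0.ne'⟩
    obtain ⟨k, hk, hkz⟩ := hζ.eq_pow_of_pow_eq_one hz
    have hco : Nat.Coprime (L / m₁) (L / m₂) := coprime_lcm_div m₁ m₂ hm₁0 hm₂0
    obtain ⟨u, v, huv⟩ := (Nat.isCoprime_iff_coprime.mpr hco)
    set p := (Nat.gcd m₁ m₂).minFac with hpdef
    have hp : p.Prime := Nat.minFac_prime (by omega)
    have hpm₁ : p ∣ m₁ := dvd_trans (Nat.minFac_dvd _) (Nat.gcd_dvd_left _ _)
    have hpm₂ : p ∣ m₂ := dvd_trans (Nat.minFac_dvd _) (Nat.gcd_dvd_right _ _)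
    have hpL : p ∣ L := dvd_trans hpm₁ hd1
    have hp2 : p ≠ 2 := by
      intro h
      rw [h] at hpm₁
      rw [Nat.odd_iff] at h₁
      omega
    have hp3 : 3 ≤ p := by
      have := hp.two_le
      omega
    have hLp0 : 0 < L / p := Nat.div_pos (Nat.le_of_dvd hL0 hpL) (by omega)
    have hLpmul : L / p * p = L := Nat.div_mul_cancel hpL
    have hlt3 : L / p * 3 ≤ L := by
      have h3 : L / p * 3 ≤ L / p * p := Nat.mul_le_mul_left _ hp3
      omega
    set ω : ℂ := ζ ^ (L / p) with hωdef
    have hω0 : ω ≠ 0 := pow_ne_zero _ hζ0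
    have hω1 : ω ≠ 1 := hζ.pow_ne_one_of_pos_of_lt hLp0.ne' (by omega)
    have hω2 : ω ^ 2 ≠ 1 := by
      rw [hωdef, ← pow_mul]
      exact hζ.pow_ne_one_of_pos_of_lt (by omega) (by omega)
    have hωm₁ : ω ^ m₁ = 1 := by
      obtain ⟨e, he⟩ := hpm₁
      rw [hωdef, ← pow_mul, he, ← mul_assoc, hLpmul, pow_mul, hζ.pow_eq_one, one_pow]
    have hωm₂ : ω ^ m₂ = 1 := by
      obtain ⟨e, he⟩ := hpm₂
      rw [hωdef, ← pow_mul, he, ← mul_assoc, hLpmul, pow_mul, hζ.pow_eq_one, one_pow]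
    set x₀ : ℂ := ζ ^ ((k : ℤ) * u * (L / m₁ : ℕ)) with hx₀def
    set y₀ : ℂ := ζ ^ ((k : ℤ) * v * (L / m₂ : ℕ)) with hy₀def
    have hζL : ζ ^ (L : ℤ) = 1 := by
      rw [zpow_natCast, hζ.pow_eq_one]
    have hcast1 : ((L / m₁ : ℕ) : ℤ) * (m₁ : ℤ) = (L : ℤ) := by
      exact_mod_cast congrArg (Nat.cast : ℕ → ℤ) (Nat.div_mul_cancel hd1)
    have hcast2 : ((L / m₂ : ℕ) : ℤ) * (m₂ : ℤ) = (L : ℤ) := by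
      exact_mod_cast congrArg (Nat.cast : ℕ → ℤ) (Nat.div_mul_cancel hd2)
    have hx₀m : x₀ ^ m₁ = 1 := by
      rw [hx₀def, ← zpow_natCast (ζ ^ _) m₁, ← zpow_mul]
      have heq : (k : ℤ) * u * ((L / m₁ : ℕ) : ℤ) * (m₁ : ℤ) = ((k : ℤ) * u) * L := by
        rw [mul_assoc, hcast1]
      rw [heq, mul_comm, zpow_mul, hζL, one_zpow]
    have hy₀m : y₀ ^ m₂ = 1 := by
      rw [hy₀def, ← zpow_natCast (ζ ^ _) m₂, ← zpow_mul]
      have heq : (k : ℤ) * v * ((L / m₂ : ℕ) : ℤ) * (m₂ : ℤ) = ((k : ℤ) * v) * L := by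
        rw [mul_assoc, hcast2]
      rw [heq, mul_comm, zpow_mul, hζL, one_zpow]
    have hxy₀ : x₀ * y₀ = z := by
      rw [hx₀def, hy₀def, ← zpow_add₀ hζ0]
      have heq : (k : ℤ) * u * ((L / m₁ : ℕ) : ℤ) + (k : ℤ) * v * ((L / m₂ : ℕ) : ℤ)
          = (k : ℤ) * (u * ((L / m₁ : ℕ) : ℤ) + v * ((L / m₂ : ℕ) : ℤ)) := by ring
      rw [heq, huv, mul_one, zpow_natCast, hkz]
    -- choose t ∈ {0, 1, 2} making both factors nontrivial
    have key : ∃ t : ℕ, x₀ * ω ^ t ≠ 1 ∧ y₀ * (ω ^ t)⁻¹ ≠ 1 := by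
      by_cases hx0 : x₀ = 1
      · by_cases hy1 : y₀ * (ω ^ 1)⁻¹ = 1
        · refine ⟨2, ?_, ?_⟩
          · rw [hx0, one_mul]; exact hω2
          · rw [pow_one, ← div_eq_mul_inv, div_eq_one_iff_eq hω0] at hy1
            intro hcon
            rw [hy1, ← div_eq_mul_inv, div_eq_one_iff_eq (pow_ne_zero 2 hω0)] at hcon
            apply hω1
            have : ω * 1 = ω * ω := by rw [mul_one, ← sq]; exact hcon
            exact (mul_left_cancel₀ hω0 this).symm
        · exact ⟨1, by rw [hx0, one_mul, pow_one]; exact hω1, hy1⟩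
      · by_cases hy0 : y₀ = 1
        · by_cases hx1 : x₀ * ω ^ 1 = 1
          · refine ⟨2, ?_, ?_⟩
            · intro hcon
              rw [pow_one] at hx1
              rw [sq, ← mul_assoc, hx1, one_mul] at hcon
              exact hω1 hcon
            · rw [hy0, one_mul]
              intro h
              exact hω2 (inv_eq_one.mp h)
          · refine ⟨1, hx1, ?_⟩
            rw [hy0, one_mul, pow_one]
            intro h
            exact hω1 (inv_eq_one.mp h)
        · exact ⟨0, by rw [pow_zero, mul_one]; exact hx0,
            by rw [pow_zero, inv_one, mul_one]; exact hy0⟩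
    obtain ⟨t, hxt, hyt⟩ := key
    refine ⟨x₀ * ω ^ t, ⟨?_, hxt⟩, y₀ * (ω ^ t)⁻¹, ⟨?_, hyt⟩, ?_⟩
    · rw [mul_pow, hx₀m, one_mul, ← pow_mul, mul_comm t m₁, pow_mul, hωm₁, one_pow]
    · rw [mul_pow, hy₀m, one_mul, inv_pow, ← pow_mul, mul_comm t m₂, pow_mul, hωm₂,
        one_pow, inv_one]
    · rw [mul_mul_mul_comm, mul_inv_cancel₀ (pow_ne_zero _ hω0), mul_one, hxy₀]
end

section
/- Let m > 3 be an odd natural number. Then for every m-th root of unity ζ there exist two distinct primitive m-th roots of unity η₁, η₂ with η₁η₂ = ζ. -/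
open scoped Pointwise

lemma isUnit_pair_s3 {M N : Type*} [Monoid M] [Monoid N] {x : M} {y : N}
    (hx : IsUnit x) (hy : IsUnit y) : IsUnit (x, y) := by
  obtain ⟨w₁, rfl⟩ := hx; obtain ⟨w₂, rfl⟩ := hy
  exact ⟨⟨((w₁ : M), (w₂ : N)), ((↑w₁⁻¹ : M), (↑w₂⁻¹ : N)),
    by simp [Prod.ext_iff], by simp [Prod.ext_iff]⟩, rfl⟩

lemma isUnit_zmod_prime_pow {p n : ℕ} (hp : p.Prime) (hn : 0 < n) (x : ZMod (p ^ n)) :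
    IsUnit x ↔ ¬ p ∣ x.val := by
  have : NeZero (p ^ n) := ⟨pow_ne_zero _ hp.pos.ne'⟩
  have hx : ((x.val : ℕ) : ZMod (p ^ n)) = x := by rw [ZMod.natCast_val, ZMod.cast_id]
  conv_lhs => rw [← hx]
  rw [ZMod.isUnit_iff_coprime, Nat.coprime_pow_right_iff hn, Nat.coprime_comm,
    hp.coprime_iff_not_dvd]

lemma sum_two_units : ∀ m : ℕ, Odd m → ∀ a : ZMod m,
    ∃ u v : ZMod m, IsUnit u ∧ IsUnit v ∧ u + v = a := by
  intro m
  induction m using Nat.recOnPosPrimePosCoprime with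
  | zero => exact fun hm => absurd hm (by decide)
  | one =>
    intro _ a
    exact ⟨0, 0, IsUnit.of_mul_eq_one (a := 0) 0 (Subsingleton.elim _ _),
      IsUnit.of_mul_eq_one (a := 0) 0 (Subsingleton.elim _ _), Subsingleton.elim _ _⟩
  | prime_pow p n hp hn =>
    intro hm a
    have hp' : p.Prime := hp
    have hpodd : p ≠ 2 := by
      rintro rfl
      exact (Nat.not_odd_iff_even.mpr (Nat.even_pow.mpr ⟨even_two, hn.ne'⟩)) hm
    by_cases h : IsUnit (a - 1)
    · exact ⟨1, a - 1, isUnit_one, h, by ring⟩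
    · refine ⟨-1, a + 1, isUnit_one.neg, ?_, by ring⟩
      rw [isUnit_zmod_prime_pow hp' hn] at h ⊢
      intro hdvd
      push_neg at h
      have : NeZero (p ^ n) := ⟨pow_ne_zero _ hp'.pos.ne'⟩
      set f := ZMod.castHom (dvd_pow_self p hn.ne') (ZMod p) with hf
      have hcast : ∀ y : ZMod (p ^ n), ((y.val : ℕ) : ZMod p) = f y := by
        intro y; rw [hf, ZMod.castHom_apply, ZMod.natCast_val]
      have h1 : f (a - 1) = 0 := by
        rw [← hcast]; exact (ZMod.natCast_eq_zero_iff _ _).mpr h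
      have h2 : f (a + 1) = 0 := by
        rw [← hcast]; exact (ZMod.natCast_eq_zero_iff _ _).mpr hdvd
      have h2' : (2 : ZMod p) = 0 := by
        have : f (a + 1) - f (a - 1) = 0 := by rw [h1, h2, sub_zero]
        rw [← map_sub, show a + 1 - (a - 1) = 2 by ring, map_ofNat] at this
        exact this
      have hpd : p ∣ 2 := by
        rw [← ZMod.natCast_eq_zero_iff]; exact_mod_cast h2'
      exact hpodd ((Nat.prime_dvd_prime_iff_eq hp' Nat.prime_two).mp hpd)
  | coprime a b ha hb hab iha ihb =>
    intro hm x
    obtain ⟨hoa, hob⟩ := Nat.odd_mul.mp hm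
    set e := ZMod.chineseRemainder hab with he
    obtain ⟨u₁, v₁, hu₁, hv₁, h₁⟩ := iha hoa (e x).1
    obtain ⟨u₂, v₂, hu₂, hv₂, h₂⟩ := ihb hob (e x).2
    refine ⟨e.symm (u₁, u₂), e.symm (v₁, v₂), ?_, ?_, ?_⟩
    · exact (isUnit_pair_s3 hu₁ hu₂).map e.symm.toRingHom.toMonoidHom
    · exact (isUnit_pair_s3 hv₁ hv₂).map e.symm.toRingHom.toMonoidHom
    · rw [← map_add]
      have : (u₁ + v₁, u₂ + v₂) = e x := by
        rw [h₁, h₂]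
      rw [show ((u₁, u₂) + (v₁, v₂) : ZMod a × ZMod b) = (u₁ + v₁, u₂ + v₂) from rfl, this,
        RingEquiv.symm_apply_apply]

lemma sum_two_distinct_units (m : ℕ) (hm : Odd m) (h3 : 3 < m) (a : ZMod m) :
    ∃ u v : ZMod m, IsUnit u ∧ IsUnit v ∧ u + v = a ∧ u ≠ v := by
  obtain ⟨u, v, hu, hv, huv⟩ := sum_two_units m hm a
  by_cases h : u = v
  · subst h
    have h2 : IsUnit (2 : ZMod m) := by
      have : ((2 : ℕ) : ZMod m) = (2 : ZMod m) := by norm_num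
      rw [← this, ZMod.isUnit_iff_coprime]
      refine Nat.prime_two.coprime_iff_not_dvd.mpr ?_
      obtain ⟨k, hk⟩ := hm; omega
    have h4 : IsUnit (4 : ZMod m) := by
      have : (4 : ZMod m) = 2 * 2 := by norm_num
      rw [this]; exact h2.mul h2
    refine ⟨4 * u, -(2 * u), h4.mul hu, (h2.mul hu).neg, by rw [← huv]; ring, ?_⟩
    intro hc
    have h6 : (6 : ZMod m) * u = 0 := by
      have : 4 * u + 2 * u = 0 := by rw [hc]; ring
      rw [← this]; ring
    have h60 : (6 : ZMod m) = 0 := by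
      obtain ⟨w, rfl⟩ := hu
      have := congrArg (· * (↑w⁻¹ : ZMod m)) h6
      simpa [mul_assoc] using this
    have hdvd : m ∣ 6 := by
      rw [← ZMod.natCast_eq_zero_iff]; exact_mod_cast h60
    have hle : m ≤ 6 := Nat.le_of_dvd (by norm_num) hdvd
    have h5 : m = 5 := by have := Nat.odd_iff.mp hm; omega
    subst h5; norm_num at hdvd
  · exact ⟨u, v, hu, hv, huv, h⟩

theorem exists_two_distinct_primitive_mul (m : ℕ) (hm : Odd m) (h3 : 3 < m)
    (ζ : ℂ) (hζ : ζ ∈ Rset m) :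
    ∃ η₁ ∈ Phi m, ∃ η₂ ∈ Phi m, η₁ ≠ η₂ ∧ η₁ * η₂ = ζ := by
  have hm0 : m ≠ 0 := by omega
  have : NeZero m := ⟨hm0⟩
  set ω := Complex.exp (2 * Real.pi * Complex.I / m) with hω
  have hprim : IsPrimitiveRoot ω m := Complex.isPrimitiveRoot_exp m hm0
  obtain ⟨i, hi, hωi⟩ := hprim.eq_pow_of_pow_eq_one hζ
  obtain ⟨u, v, hu, hv, huv, hne⟩ := sum_two_distinct_units m hm h3 (i : ZMod m)
  have hucop : Nat.Coprime u.val m := by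
    have hx : ((u.val : ℕ) : ZMod m) = u := by rw [ZMod.natCast_val, ZMod.cast_id]
    rw [← ZMod.isUnit_iff_coprime, hx]; exact hu
  have hvcop : Nat.Coprime v.val m := by
    have hx : ((v.val : ℕ) : ZMod m) = v := by rw [ZMod.natCast_val, ZMod.cast_id]
    rw [← ZMod.isUnit_iff_coprime, hx]; exact hv
  refine ⟨ω ^ u.val, hprim.pow_of_coprime u.val hucop,
    ω ^ v.val, hprim.pow_of_coprime v.val hvcop, ?_, ?_⟩
  · intro hc
    exact hne (ZMod.val_injective m
      (hprim.pow_inj (ZMod.val_lt u) (ZMod.val_lt v) hc))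
  · rw [← pow_add, ← hωi]
    have hmod : u.val + v.val ≡ i [MOD m] := by
      rw [← ZMod.natCast_eq_natCast_iff]
      push_cast
      rw [ZMod.natCast_val, ZMod.natCast_val, ZMod.cast_id, ZMod.cast_id]
      exact huv
    have hmod' : (u.val + v.val) % m = i := by
      rw [Nat.ModEq] at hmod; rw [hmod, Nat.mod_eq_of_lt hi]
    have hdecomp : u.val + v.val = m * ((u.val + v.val) / m) + i := by
      conv_lhs => rw [← Nat.div_add_mod (u.val + v.val) m]
      rw [hmod']
    rw [hdecomp, pow_add, pow_mul, hprim.pow_eq_one, one_pow, one_mul]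
end

section
/- Let m be an odd natural number with m ∉ {1, 3, 5, 9, 15}. Then there exist six pairwise distinct primitive m-th roots of unity η₁, η₁⁻¹, η₂, η₂⁻¹, η₃, η₃⁻¹ such that η₁η₂η₃ = 1. -/
open scoped Pointwise

lemma not_dvd_of_natAbs_lt (m : ℕ) (d : ℤ) (h0 : d ≠ 0) (h : d.natAbs < m) :
    ¬ (m : ℤ) ∣ d := by
  intro hd
  have h1 : m ∣ d.natAbs := Int.natCast_dvd_natCast.mp (Int.dvd_natAbs.mpr hd)
  have h2 := Nat.le_of_dvd (by omega : 0 < d.natAbs) h1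
  omega

lemma key (m : ℕ) (hm0 : m ≠ 0) (a b c : ℤ) (hsum : a + b + c = 0)
    (ha : a.gcd m = 1) (hb : b.gcd m = 1) (hc : c.gcd m = 1)
    (h1 : ¬ (m:ℤ) ∣ 2*a) (h2 : ¬ (m:ℤ) ∣ 2*b) (h3 : ¬ (m:ℤ) ∣ 2*c)
    (h4 : ¬ (m:ℤ) ∣ a-b) (h5 : ¬ (m:ℤ) ∣ a+b)
    (h6 : ¬ (m:ℤ) ∣ a-c) (h7 : ¬ (m:ℤ) ∣ a+c)
    (h8 : ¬ (m:ℤ) ∣ b-c) (h9 : ¬ (m:ℤ) ∣ b+c) :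
    ∃ η₁ ∈ Phi m, ∃ η₂ ∈ Phi m, ∃ η₃ ∈ Phi m,
      ([η₁, η₁⁻¹, η₂, η₂⁻¹, η₃, η₃⁻¹] : List ℂ).Nodup ∧ η₁ * η₂ * η₃ = 1 := by
  have hζ := Complex.isPrimitiveRoot_exp m hm0
  set ζ : ℂ := Complex.exp (2 * Real.pi * Complex.I / m) with hζdef
  have hne : ζ ≠ 0 := hζ.ne_zero hm0
  have hE : ∀ s t : ℤ, ¬ (m:ℤ) ∣ (s - t) → ζ ^ s ≠ ζ ^ t := by
    intro s t hst heq
    apply hst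
    rw [← hζ.zpow_eq_one_iff_dvd, zpow_sub₀ hne, heq, div_self (zpow_ne_zero _ hne)]
  refine ⟨ζ^a, hζ.zpow_of_gcd_eq_one a ha, ζ^b, hζ.zpow_of_gcd_eq_one b hb,
    ζ^c, hζ.zpow_of_gcd_eq_one c hc, ?_, ?_⟩
  · have : ([ζ^a, ζ^(-a), ζ^b, ζ^(-b), ζ^c, ζ^(-c)] : List ℂ).Nodup := by
      simp only [List.nodup_cons, List.mem_cons, List.not_mem_nil, List.nodup_nil,
        or_false, and_true, not_or, not_false_eq_true]
      refine ⟨⟨?_, ?_, ?_, ?_, ?_⟩, ⟨?_, ?_, ?_, ?_⟩, ⟨?_, ?_, ?_⟩, ⟨?_, ?_⟩, ?_⟩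
      · exact hE a (-a) (by rw [show a - -a = 2*a by ring]; exact h1)
      · exact hE a b h4
      · exact hE a (-b) (by rw [show a - -b = a+b by ring]; exact h5)
      · exact hE a c h6
      · exact hE a (-c) (by rw [show a - -c = a+c by ring]; exact h7)
      · exact hE (-a) b (by rw [show -a - b = -(a+b) by ring, dvd_neg]; exact h5)
      · exact hE (-a) (-b) (by rw [show -a - -b = -(a-b) by ring, dvd_neg]; exact h4)
      · exact hE (-a) c (by rw [show -a - c = -(a+c) by ring, dvd_neg]; exact h7)
      · exact hE (-a) (-c) (by rw [show -a - -c = -(a-c) by ring, dvd_neg]; exact h6)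
      · exact hE b (-b) (by rw [show b - -b = 2*b by ring]; exact h2)
      · exact hE b c h8
      · exact hE b (-c) (by rw [show b - -c = b+c by ring]; exact h9)
      · exact hE (-b) c (by rw [show -b - c = -(b+c) by ring, dvd_neg]; exact h9)
      · exact hE (-b) (-c) (by rw [show -b - -c = -(b-c) by ring, dvd_neg]; exact h8)
      · exact hE c (-c) (by rw [show c - -c = 2*c by ring]; exact h3)
    simpa only [zpow_neg] using this
  · rw [← zpow_add₀ hne, ← zpow_add₀ hne, hsum, zpow_zero]

theorem exists_six_distinct_primitive_prod_one (m : ℕ) (hm : Odd m)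
    (h : m ∉ ({1, 3, 5, 9, 15} : Set ℕ)) :
    ∃ η₁ ∈ Phi m, ∃ η₂ ∈ Phi m, ∃ η₃ ∈ Phi m,
      ([η₁, η₁⁻¹, η₂, η₂⁻¹, η₃, η₃⁻¹] : List ℂ).Nodup ∧ η₁ * η₂ * η₃ = 1 := by
  simp only [Set.mem_insert_iff, Set.mem_singleton_iff, not_or] at h
  obtain ⟨h1, h3, h5, h9, h15⟩ := h
  have hodd : m % 2 = 1 := Nat.odd_iff.mp hm
  have hc2 : Nat.Coprime 2 m := Nat.coprime_two_left.mpr hm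
  by_cases hd3 : 3 ∣ m
  · by_cases hd5 : 5 ∣ m
    · -- 15 ∣ m
      by_cases h45 : m = 45
      · subst h45
        refine key 45 (by norm_num) 1 13 (-14) (by ring)
          (by simp [Int.gcd]) (by simp [Int.gcd]) (by simp [Int.gcd])
          ?_ ?_ ?_ ?_ ?_ ?_ ?_ ?_ ?_
        all_goals exact not_dvd_of_natAbs_lt 45 _ (by norm_num) (by norm_num)
      · -- general case via CRT
        have hm0 : m ≠ 0 := by omega
        have hbig : 75 ≤ m := by omega
        set P := 3 ^ m.factorization 3 with hPdef
        set s := m / P with hsdef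
        have hPs : P * s = m := Nat.ordProj_mul_ordCompl_eq_self m 3
        have h3s : ¬ 3 ∣ s := Nat.not_dvd_ordCompl (by norm_num) hm0
        have hcoPs : Nat.Coprime P s :=
          Nat.Coprime.pow_left _ (Nat.coprime_ordCompl (by norm_num) hm0)
        have hco5P : Nat.Coprime 5 P :=
          Nat.Coprime.pow_right _ (by norm_num)
        have h5s : 5 ∣ s := by
          refine (Nat.Coprime.dvd_of_dvd_mul_left hco5P ?_)
          rw [hPs]; exact hd5
        have hspos : 0 < s := by
          rcases Nat.eq_zero_or_pos s with h0 | h0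
          · rw [h0, Nat.mul_zero] at hPs; omega
          · exact h0
        have hs5 : 5 ≤ s := Nat.le_of_dvd hspos h5s
        have hPpos : 0 < P := Nat.pow_pos (by norm_num)
        have hPdvd : P ∣ m := ⟨s, hPs.symm⟩
        have hsdvd : s ∣ m := ⟨P, by rw [← hPs, Nat.mul_comm]⟩
        obtain ⟨N, hN3, hNs⟩ := Nat.chineseRemainder hcoPs 4 2
        -- coprimality facts
        have hcNP : Nat.Coprime N P := by
          have := hN3.gcd_eq
          have h4P : Nat.Coprime 4 P := Nat.Coprime.pow_right _ (by norm_num)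
          unfold Nat.Coprime; rw [this]; exact h4P
        have hcNs : Nat.Coprime N s := by
          have := hNs.gcd_eq
          unfold Nat.Coprime; rw [this]
          exact Nat.coprime_two_left.mpr hm |>.coprime_dvd_right hsdvd |>.symm
            |>.symm.coprime_dvd_left (dvd_refl 2) |>.symm |>.symm
        have hcNm : Nat.Coprime N m := by
          rw [← hPs]; exact Nat.Coprime.mul_right hcNP hcNs
        have hN1P : Nat.Coprime (N+1) P := by
          have heq := (Nat.ModEq.add_right 1 hN3).gcd_eq
          have h5P : Nat.Coprime 5 P := Nat.Coprime.pow_right _ (by norm_num)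
          unfold Nat.Coprime; rw [heq]; exact h5P
        have hN1s : Nat.Coprime (N+1) s := by
          have heq := (Nat.ModEq.add_right 1 hNs).gcd_eq
          unfold Nat.Coprime; rw [heq]
          exact ((Nat.Prime.coprime_iff_not_dvd (by norm_num)).mpr h3s)
        have hN1m : Nat.Coprime (N+1) m := by
          rw [← hPs]; exact Nat.Coprime.mul_right hN1P hN1s
        -- integer congruences
        have hB3 : (P:ℤ) ∣ 4 - (N:ℤ) := by exact_mod_cast hN3.dvd
        have hBs : (s:ℤ) ∣ 2 - (N:ℤ) := by exact_mod_cast hNs.dvd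
        have hsZ : (s:ℤ) ∣ (m:ℤ) := Int.natCast_dvd_natCast.mpr hsdvd
        have hPZ : (P:ℤ) ∣ (m:ℤ) := Int.natCast_dvd_natCast.mpr hPdvd
        -- helper: m ∣ k (ℕ) with k coprime to m gives contradiction
        have hcontra : ∀ k : ℕ, Nat.Coprime k m → m ∣ k → False := by
          intro k hk hdk
          have : m ∣ Nat.gcd k m := Nat.dvd_gcd hdk (dvd_refl m)
          rw [hk] at this
          have := Nat.le_of_dvd Nat.one_pos this
          omega
        refine key m hm0 1 (N:ℤ) (-((N:ℤ)+1)) (by ring)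
          (by simp [Int.gcd]) ?_ ?_ ?_ ?_ ?_ ?_ ?_ ?_ ?_ ?_ ?_
        · -- gcd N m
          simpa [Int.gcd] using hcNm
        · -- gcd (-(N+1)) m
          simp only [Int.gcd, Int.natAbs_neg]
          norm_num
          exact_mod_cast hN1m
        · -- ¬ m ∣ 2
          exact not_dvd_of_natAbs_lt m _ (by norm_num) (by norm_num; omega)
        · -- ¬ m ∣ 2N
          intro hd
          have hd' : m ∣ 2 * N := by exact_mod_cast hd
          have : m ∣ N := (hc2.symm).dvd_of_dvd_mul_left hd'
          exact hcontra N hcNm this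
        · -- ¬ m ∣ 2(-(N+1))
          intro hd
          rw [show (2:ℤ) * -((N:ℤ)+1) = -(2*((N:ℤ)+1)) by ring, dvd_neg] at hd
          have hd' : m ∣ 2 * (N+1) := by exact_mod_cast hd
          have : m ∣ (N+1) := (hc2.symm).dvd_of_dvd_mul_left hd'
          exact hcontra (N+1) hN1m this
        · -- ¬ m ∣ 1 - N
          intro hd
          have hsN : (s:ℤ) ∣ 1 - (N:ℤ) := hsZ.trans hd
          have : (s:ℤ) ∣ 1 := by
            have := dvd_sub hBs hsN
            rwa [show (2 - (N:ℤ)) - (1 - (N:ℤ)) = 1 by ring] at this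
          have : s ∣ 1 := by exact_mod_cast this
          have := Nat.le_of_dvd (by norm_num) this
          omega
        · -- ¬ m ∣ 1 + N
          intro hd
          have hd' : m ∣ (N+1) := by
            have : ((N:ℤ)+1) = ((N+1 : ℕ) : ℤ) := by push_cast; ring
            rw [this, show (1:ℤ) + (N:ℤ) = ((N:ℤ)+1) by ring] at *
            exact_mod_cast hd
          exact hcontra (N+1) hN1m hd'
        · -- ¬ m ∣ 1 - (-(N+1)) = N + 2
          intro hd
          rw [show (1:ℤ) - -((N:ℤ)+1) = (N:ℤ) + 2 by ring] at hd
          have hsN : (s:ℤ) ∣ (N:ℤ) + 2 := hsZ.trans hd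
          have : (s:ℤ) ∣ 4 := by
            have := dvd_add hBs hsN
            rwa [show (2 - (N:ℤ)) + ((N:ℤ) + 2) = 4 by ring] at this
          have : s ∣ 4 := by exact_mod_cast this
          have := Nat.le_of_dvd (by norm_num) this
          omega
        · -- ¬ m ∣ 1 + (-(N+1)) = -N
          intro hd
          rw [show (1:ℤ) + -((N:ℤ)+1) = -(N:ℤ) by ring, dvd_neg] at hd
          exact hcontra N hcNm (by exact_mod_cast hd)
        · -- ¬ m ∣ N - (-(N+1)) = 2N + 1
          intro hd
          rw [show (N:ℤ) - -((N:ℤ)+1) = 2*(N:ℤ) + 1 by ring] at hd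
          have hsN : (s:ℤ) ∣ 2*(N:ℤ) + 1 := hsZ.trans hd
          have hPN : (P:ℤ) ∣ 2*(N:ℤ) + 1 := hPZ.trans hd
          have hs5' : (s:ℤ) ∣ 5 := by
            have := dvd_add hsN (hBs.mul_left 2)
            rwa [show (2*(N:ℤ) + 1) + 2*(2 - (N:ℤ)) = 5 by ring] at this
          have hP9 : (P:ℤ) ∣ 9 := by
            have := dvd_add hPN (hB3.mul_left 2)
            rwa [show (2*(N:ℤ) + 1) + 2*(4 - (N:ℤ)) = 9 by ring] at this
          have hs5n : s ∣ 5 := by exact_mod_cast hs5'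
          have hP9n : P ∣ 9 := by exact_mod_cast hP9
          have hseq : s = 5 := Nat.dvd_antisymm hs5n (by omega)
          have hPle : P ≤ 9 := Nat.le_of_dvd (by norm_num) hP9n
          rw [hseq] at hPs
          omega
        · -- ¬ m ∣ N + (-(N+1)) = -1
          intro hd
          rw [show (N:ℤ) + -((N:ℤ)+1) = -1 by ring, dvd_neg] at hd
          have : m ∣ 1 := by exact_mod_cast hd
          have := Nat.le_of_dvd Nat.one_pos this
          omega
    · -- 3 ∣ m, 5 ∤ m, m ≥ 21, use (1, 4, -5)
      have hbig : 21 ≤ m := by obtain ⟨k, hk⟩ := hd3; omega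
      refine key m (by omega) 1 4 (-5) (by ring) (by simp [Int.gcd]) ?_ ?_
        ?_ ?_ ?_ ?_ ?_ ?_ ?_ ?_ ?_
      · simpa [Int.gcd] using (Nat.Coprime.pow_left 2 hc2 : Nat.Coprime 4 m)
      · simpa [Int.gcd] using ((Nat.Prime.coprime_iff_not_dvd (by norm_num)).mpr hd5 : Nat.Coprime 5 m)
      all_goals exact not_dvd_of_natAbs_lt m _ (by norm_num) (by norm_num; omega)
  · -- 3 ∤ m, m ≥ 7, use (1, 2, -3)
    have hbig : 7 ≤ m := by omega
    refine key m (by omega) 1 2 (-3) (by ring) (by simp [Int.gcd]) ?_ ?_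
      ?_ ?_ ?_ ?_ ?_ ?_ ?_ ?_ ?_
    · simpa [Int.gcd] using hc2
    · simpa [Int.gcd] using ((Nat.Prime.coprime_iff_not_dvd (by norm_num)).mpr hd3 : Nat.Coprime 3 m)
    all_goals exact not_dvd_of_natAbs_lt m _ (by norm_num) (by norm_num; omega)
end

section
/- Let m be an odd natural number with m ∉ {1, 3, 5, 9, 15}. Then for every primitive m-th root of unity η there exist primitive m-th roots of unity η₁, η₂ such that η = η₁η₂ and the six elements η^{±1}, η₁^{±1}, η₂^{±1} are pairwise distinct. -/
open scoped Pointwise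

lemma key_s5 (m : ℕ) (hm : Odd m) (hm1 : 1 < m) (η : ℂ) (hη : IsPrimitiveRoot η m)
    (c : ℕ) (hc2 : 2 ≤ c)
    (h1 : Nat.Coprime c m) (h2 : Nat.Coprime (c - 1) m)
    (A2 : ((c : ZMod m) - 2) ≠ 0) (Aneg : ((c : ZMod m) + 1) ≠ 0)
    (Ahalf : (2 * (c : ZMod m) - 1) ≠ 0) :
    ∃ η₁ ∈ Phi m, ∃ η₂ ∈ Phi m, η = η₁ * η₂ ∧
      ([η, η⁻¹, η₁, η₁⁻¹, η₂, η₂⁻¹] : List ℂ).Nodup := by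
  haveI : Fact (1 < m) := ⟨hm1⟩
  haveI : NeZero m := ⟨by omega⟩
  have hm0 : 0 < m := by omega
  have hne : η ≠ 0 := hη.ne_zero (by omega)
  set d : ℕ := c * (m - 1) + 1 with hd
  -- ZMod facts
  have hCm : ((m : ℤ) : ZMod m) = 0 := by
    simpa using (ZMod.natCast_self m)
  have hdz : ((d : ZMod m)) = 1 - (c : ZMod m) := by
    have : ((d : ℕ) : ZMod m) = (c : ZMod m) * ((m : ZMod m) - 1) + 1 := by
      push_cast [hd, Nat.cast_sub (by omega : 1 ≤ m)]
      ring
    rw [this, ZMod.natCast_self]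
    ring
  have uC : IsUnit ((c : ZMod m)) := (ZMod.isUnit_iff_coprime c m).mpr h1
  have uC1 : IsUnit ((c : ZMod m) - 1) := by
    have := (ZMod.isUnit_iff_coprime (c - 1) m).mpr h2
    rwa [Nat.cast_sub (by omega : 1 ≤ c), Nat.cast_one] at this
  have u2 : IsUnit ((2 : ZMod m)) := by
    have : Nat.Coprime 2 m := by
      rw [Nat.coprime_comm]
      exact hm.coprime_two_right
    simpa using (ZMod.isUnit_iff_coprime 2 m).mpr this
  have hcop_d : Nat.Coprime d m := by
    rw [← ZMod.isUnit_iff_coprime, hdz]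
    have : (1 : ZMod m) - c = -((c : ZMod m) - 1) := by ring
    rw [this]
    exact uC1.neg
  -- the two roots
  refine ⟨η ^ c, hη.pow_of_coprime c h1, η ^ d, hη.pow_of_coprime d hcop_d, ?_, ?_⟩
  · rw [← pow_add]
    have hcd : c + d = c * m + 1 := by
      rw [hd]
      rcases m with _ | n
      · omega
      · simp only [Nat.add_sub_cancel, Nat.mul_succ]; omega
    rw [hcd, pow_succ, pow_mul', hη.pow_eq_one, one_pow, one_mul]
  · -- Nodup
    have heq : ∀ a b : ℤ, η ^ a = η ^ b ↔ ((a : ZMod m) = (b : ZMod m)) := by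
      intro a b
      rw [← sub_eq_zero (a := (a : ZMod m)), ← Int.cast_sub,
        ZMod.intCast_zmod_eq_zero_iff_dvd, ← hη.zpow_eq_one_iff_dvd,
        zpow_sub₀ hne, div_eq_one_iff_eq (zpow_ne_zero _ hne)]
    have ne' : ∀ a b : ℤ, (((a : ZMod m)) ≠ (b : ZMod m)) → η ^ a ≠ η ^ b :=
      fun a b hab hab' => hab ((heq a b).mp hab')
    have e1 : η = η ^ (1 : ℤ) := (zpow_one η).symm
    have em1 : η⁻¹ = η ^ (-1 : ℤ) := by simp
    have ec : η ^ c = η ^ ((c : ℤ)) := (zpow_natCast η c).symm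
    have ecm : (η ^ c)⁻¹ = η ^ (-(c : ℤ)) := by rw [ec, ← zpow_neg]
    have ed : η ^ d = η ^ ((d : ℤ)) := (zpow_natCast η d).symm
    have edm : (η ^ d)⁻¹ = η ^ (-(d : ℤ)) := by rw [ed, ← zpow_neg]
    have hm1' : ((m - 1 : ℕ) : ZMod m) = -1 := by
      rw [Nat.cast_sub (by omega : 1 ≤ m), ZMod.natCast_self]; ring
    have nz1 : (1 : ZMod m) ≠ 0 := one_ne_zero
    have nzC : (c : ZMod m) ≠ 0 := uC.ne_zero
    have nzC1 : (c : ZMod m) - 1 ≠ 0 := uC1.ne_zero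
    have nz2C : 2 * (c : ZMod m) ≠ 0 := (u2.mul uC).ne_zero
    have nz2C1 : 2 * ((c : ZMod m) - 1) ≠ 0 := (u2.mul uC1).ne_zero
    have nz2' : (2 : ZMod m) ≠ 0 := u2.ne_zero
    clear e1 em1 ec ecm ed edm
    simp only [List.nodup_cons, List.mem_cons, List.not_mem_nil, or_false, not_or,
      List.nodup_nil, and_true]
    push_cast at A2 Aneg Ahalf ⊢
    refine ⟨⟨?_, ?_, ?_, ?_, ?_⟩, ⟨?_, ?_, ?_, ?_⟩, ⟨?_, ?_, ?_⟩, ⟨?_, ?_⟩, ?_, not_false⟩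
    · exact fun hh => ne' 1 (-1) (by push_cast [hm1']; intro hh2; exact nz2' (by linear_combination hh2)) (by simpa using hh)
    · exact fun hh => ne' 1 c (by push_cast [hm1']; intro hh2; exact nzC1 (by linear_combination -hh2)) (by simpa using hh)
    · exact fun hh => ne' 1 (-c) (by push_cast [hm1']; intro hh2; exact Aneg (by linear_combination hh2)) (by simpa using hh)
    · exact fun hh => ne' 1 d (by push_cast [hm1']; intro hh2; exact nzC (by linear_combination hh2 + hdz)) (by simpa using hh)
    · exact fun hh => ne' 1 (-d) (by push_cast [hm1']; intro hh2; exact A2 (by linear_combination -hh2 + hdz)) (by simpa using hh)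
    · exact fun hh => ne' (-1) c (by push_cast [hm1']; intro hh2; exact Aneg (by linear_combination -hh2)) (by simpa using hh)
    · exact fun hh => ne' (-1) (-c) (by push_cast [hm1']; intro hh2; exact nzC1 (by linear_combination hh2)) (by simpa using hh)
    · exact fun hh => ne' (-1) d (by push_cast [hm1']; intro hh2; exact A2 (by linear_combination hh2 + hdz)) (by simpa using hh)
    · exact fun hh => ne' (-1) (-d) (by push_cast [hm1']; intro hh2; exact nzC (by linear_combination -hh2 + hdz)) (by simpa using hh)
    · exact fun hh => ne' c (-c) (by push_cast [hm1']; intro hh2; exact nz2C (by linear_combination hh2)) (by simpa using hh)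
    · exact fun hh => ne' c d (by push_cast [hm1']; intro hh2; exact Ahalf (by linear_combination hh2 + hdz)) (by simpa using hh)
    · exact fun hh => ne' c (-d) (by push_cast [hm1']; intro hh2; exact nz1 (by linear_combination hh2 - hdz)) (by simpa using hh)
    · exact fun hh => ne' (-c) d (by push_cast [hm1']; intro hh2; exact nz1 (by linear_combination -hh2 - hdz)) (by simpa using hh)
    · exact fun hh => ne' (-c) (-d) (by push_cast [hm1']; intro hh2; exact Ahalf (by linear_combination -hh2 + hdz)) (by simpa using hh)
    · exact fun hh => ne' d (-d) (by push_cast [hm1']; intro hh2; exact nz2C1 (by linear_combination -hh2 + 2 * hdz)) (by simpa using hh)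


theorem primitive_eq_prod_two_primitive_distinct (m : ℕ) (hm : Odd m)
    (h : m ∉ ({1, 3, 5, 9, 15} : Set ℕ)) (η : ℂ) (hη : η ∈ Phi m) :
    ∃ η₁ ∈ Phi m, ∃ η₂ ∈ Phi m, η = η₁ * η₂ ∧
      ([η, η⁻¹, η₁, η₁⁻¹, η₂, η₂⁻¹] : List ℂ).Nodup := by
  simp only [Set.mem_insert_iff, Set.mem_singleton_iff, not_or] at h
  obtain ⟨hne1, hne3, hne5, hne9, hne15⟩ := h
  have hm2 : m % 2 = 1 := Nat.odd_iff.mp hm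
  have hm1 : 1 < m := by rcases Nat.lt_or_ge m 2 with h' | h' <;> omega
  haveI : Fact (1 < m) := ⟨hm1⟩
  haveI : NeZero m := ⟨by omega⟩
  have hηp : IsPrimitiveRoot η m := hη
  have cop2 : Nat.Coprime 2 m := Nat.coprime_comm.mp hm.coprime_two_right
  have hknz : ∀ k : ℕ, ¬ m ∣ k → ((k : ZMod m)) ≠ 0 := fun k hk h' =>
    hk ((ZMod.natCast_eq_zero_iff k m).mp h')
  by_cases h3 : 3 ∣ m
  · by_cases h5 : 5 ∣ m
    · have h15 : 15 ∣ m := Nat.Coprime.mul_dvd_of_dvd_of_dvd (by norm_num) h3 h5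
      by_cases h7 : 7 ∣ m
      · -- case D : 105 ∣ m
        set t : ℕ := ordCompl[5] m with hT
        have hts : 5 ^ (m.factorization 5) * t = m := Nat.ordProj_mul_ordCompl_eq_self m 5
        have ht5 : ¬ 5 ∣ t := Nat.not_dvd_ordCompl (by norm_num) (by omega)
        have htpos : 0 < t := Nat.ordCompl_pos 5 (by omega)
        have hp_t : ∀ p : ℕ, p.Prime → p ∣ m → p ≠ 5 → p ∣ t := by
          intro p pp hpm hp5
          have hd : p ∣ 5 ^ (m.factorization 5) * t := by rw [hts]; exact hpm
          rcases (Nat.Prime.dvd_mul pp).mp hd with h' | h'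
          · exact absurd ((Nat.prime_dvd_prime_iff_eq pp (by norm_num)).mp
              (pp.dvd_of_dvd_pow h')) hp5
          · exact h'
        have ht7 : 7 ∣ t := hp_t 7 (by norm_num) h7 (by norm_num)
        have ht4m : t ^ 4 % 5 = 1 := by
          haveI : Fact (Nat.Prime 5) := ⟨by norm_num⟩
          have ht0 : (t : ZMod 5) ≠ 0 := by
            rwa [Ne, ZMod.natCast_eq_zero_iff]
          have h41 : ((t ^ 4 : ℕ) : ZMod 5) = ((1 : ℕ) : ZMod 5) := by
            push_cast
            simpa using ZMod.pow_card_sub_one_eq_one ht0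
          have := (ZMod.natCast_eq_natCast_iff' _ _ _).mp h41
          simpa using this
        have ht47 : 7 ∣ t ^ 4 := dvd_pow ht7 (by norm_num)
        refine key_s5 m hm hm1 η hηp (2 + t ^ 4) (by omega) ?_ ?_ ?_ ?_ ?_
        · -- Coprime (2 + t^4) m
          by_contra hcc
          obtain ⟨p, pp, hpc, hpm⟩ := Nat.Prime.not_coprime_iff_dvd.mp hcc
          by_cases hp5 : p = 5
          · subst hp5
            obtain ⟨j, hj⟩ := hpc
            omega
          · have hpt : p ∣ t ^ 4 := dvd_pow (hp_t p pp hpm hp5) (by norm_num)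
            have hp2 : p ∣ 2 := (Nat.dvd_add_right hpt).mp (by rwa [Nat.add_comm] at hpc)
            have : p = 2 := (Nat.prime_dvd_prime_iff_eq pp (by norm_num)).mp hp2
            subst this
            obtain ⟨j, hj⟩ := hpm
            omega
        · -- Coprime (2 + t^4 - 1) m
          have he : 2 + t ^ 4 - 1 = 1 + t ^ 4 := by omega
          rw [he]
          by_contra hcc
          obtain ⟨p, pp, hpc, hpm⟩ := Nat.Prime.not_coprime_iff_dvd.mp hcc
          by_cases hp5 : p = 5
          · subst hp5
            obtain ⟨j, hj⟩ := hpc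
            omega
          · have hpt : p ∣ t ^ 4 := dvd_pow (hp_t p pp hpm hp5) (by norm_num)
            have hp1 : p ∣ 1 := (Nat.dvd_add_right hpt).mp (by rwa [Nat.add_comm] at hpc)
            exact Nat.Prime.one_lt pp |>.ne' (Nat.dvd_one.mp hp1)
        · -- (c : ZMod m) - 2 ≠ 0
          have he : (((2 + t ^ 4 : ℕ) : ZMod m)) - 2 = ((t ^ 4 : ℕ) : ZMod m) := by
            push_cast; ring
          rw [he]
          refine hknz _ (fun hd => ht5 ?_)
          have h54 : 5 ∣ t ^ 4 := dvd_trans h5 hd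
          exact (Nat.Prime.dvd_of_dvd_pow (by norm_num) h54)
        · -- (c : ZMod m) + 1 ≠ 0
          have he : (((2 + t ^ 4 : ℕ) : ZMod m)) + 1 = ((t ^ 4 + 3 : ℕ) : ZMod m) := by
            push_cast; ring
          rw [he]
          refine hknz _ (fun hd => ?_)
          obtain ⟨j, hj⟩ := dvd_trans h5 hd
          omega
        · -- 2 * (c : ZMod m) - 1 ≠ 0
          have he : 2 * (((2 + t ^ 4 : ℕ) : ZMod m)) - 1 = ((2 * t ^ 4 + 3 : ℕ) : ZMod m) := by
            push_cast; ring
          rw [he]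
          refine hknz _ (fun hd => ?_)
          obtain ⟨j, hj⟩ := dvd_trans h7 hd
          obtain ⟨i, hi⟩ := ht47
          omega
      · -- case C : 15 ∣ m, ¬ 7 ∣ m, c = 8
        have hm15 : 15 ≤ m := Nat.le_of_dvd (by omega) h15
        refine key_s5 m hm hm1 η hηp 8 (by norm_num) ?_ ?_ ?_ ?_ ?_
        · exact (by norm_num : (8:ℕ) = 2 ^ 3) ▸ cop2.pow_left 3
        · exact (by norm_num : (8:ℕ) - 1 = 7) ▸
            (Nat.Prime.coprime_iff_not_dvd (by norm_num)).mpr h7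
        · have he : (((8:ℕ) : ZMod m)) - 2 = ((6 : ℕ) : ZMod m) := by push_cast; ring
          rw [he]
          exact hknz 6 (fun hd => by have := Nat.le_of_dvd (by norm_num) hd; omega)
        · have he : (((8:ℕ) : ZMod m)) + 1 = ((9 : ℕ) : ZMod m) := by push_cast; ring
          rw [he]
          exact hknz 9 (fun hd => by have := Nat.le_of_dvd (by norm_num) hd; omega)
        · have he : 2 * (((8:ℕ) : ZMod m)) - 1 = ((15 : ℕ) : ZMod m) := by push_cast; ring
          rw [he]
          exact hknz 15 (fun hd => hne15 (Nat.dvd_antisymm hd h15))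
    · -- case B : 3 ∣ m, ¬ 5 ∣ m, c = 5
      have hm3 : 3 ≤ m := Nat.le_of_dvd (by omega) h3
      refine key_s5 m hm hm1 η hηp 5 (by norm_num) ?_ ?_ ?_ ?_ ?_
      · exact (Nat.Prime.coprime_iff_not_dvd (by norm_num)).mpr h5
      · exact (by norm_num : (5:ℕ) - 1 = 2 ^ 2) ▸ cop2.pow_left 2
      · have he : (((5:ℕ) : ZMod m)) - 2 = ((3 : ℕ) : ZMod m) := by push_cast; ring
        rw [he]
        exact hknz 3 (fun hd => hne3 (Nat.dvd_antisymm hd h3))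
      · have he : (((5:ℕ) : ZMod m)) + 1 = ((6 : ℕ) : ZMod m) := by push_cast; ring
        rw [he]
        refine hknz 6 (fun hd => ?_)
        have := Nat.le_of_dvd (by norm_num) hd
        obtain ⟨j, hj⟩ := h3
        omega
      · have he : 2 * (((5:ℕ) : ZMod m)) - 1 = ((9 : ℕ) : ZMod m) := by push_cast; ring
        rw [he]
        refine hknz 9 (fun hd => ?_)
        have := Nat.le_of_dvd (by norm_num) hd
        obtain ⟨j, hj⟩ := h3
        omega
  · -- case A : ¬ 3 ∣ m, c = 3
    have hm3 : m ≠ 3 := by rintro rfl; exact h3 dvd_rfl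
    refine key_s5 m hm hm1 η hηp 3 (by norm_num) ?_ ?_ ?_ ?_ ?_
    · exact (Nat.Prime.coprime_iff_not_dvd (by norm_num)).mpr h3
    · exact (by norm_num : (3:ℕ) - 1 = 2) ▸ cop2
    · have he : (((3:ℕ) : ZMod m)) - 2 = ((1 : ℕ) : ZMod m) := by push_cast; ring
      rw [he]
      exact hknz 1 (fun hd => by have := Nat.le_of_dvd (by norm_num) hd; omega)
    · have he : (((3:ℕ) : ZMod m)) + 1 = ((4 : ℕ) : ZMod m) := by push_cast; ring
      rw [he]
      exact hknz 4 (fun hd => by have := Nat.le_of_dvd (by norm_num) hd; omega)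
    · have he : 2 * (((3:ℕ) : ZMod m)) - 1 = ((5 : ℕ) : ZMod m) := by push_cast; ring
      rw [he]
      exact hknz 5 (fun hd => by have := Nat.le_of_dvd (by norm_num) hd; omega)
end

section
/- Let m > 3 be an odd natural number and define Λ₃*(Φ(m)) = {η₁η₂η₃⁻¹ : η₁, η₂, η₃ ∈ Φ(m) pairwise distinct}. Then Λ₃*(Φ(m)) = R(m). -/
lemma zmod_isUnit_iff_coprime_val (n : ℕ) [NeZero n] (x : ZMod n) :
    IsUnit x ↔ Nat.Coprime x.val n := by
  conv_lhs => rw [show x = ((x.val : ℕ) : ZMod n) by simp [ZMod.natCast_val, ZMod.cast_id]]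
  exact ZMod.isUnit_iff_coprime x.val n

lemma zmod_pp_unit_iff (p e : ℕ) (hp : p.Prime) (he : 0 < e) (x : ZMod (p^e)) :
    IsUnit x ↔ (ZMod.castHom (dvd_pow_self p he.ne') (ZMod p)) x ≠ 0 := by
  haveI : NeZero (p^e) := ⟨pow_ne_zero e hp.ne_zero⟩
  have hcast : (ZMod.castHom (dvd_pow_self p he.ne') (ZMod p)) x = ((x.val : ℕ) : ZMod p) := by
    rw [ZMod.castHom_apply, ← ZMod.natCast_val]
  rw [hcast, zmod_isUnit_iff_coprime_val, Ne, ZMod.natCast_eq_zero_iff]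
  show Nat.Coprime _ _ ↔ _
  rw [Nat.coprime_pow_right_iff he, Nat.coprime_comm, hp.coprime_iff_not_dvd]

lemma key_pp (p e : ℕ) (hp : p.Prime) (hp2 : p ≠ 2) (he : 0 < e) (k : ZMod (p^e)) :
    ∃ u v w : ZMod (p^e), IsUnit u ∧ IsUnit v ∧ IsUnit w ∧ u + v - w = k ∧
      (3 < p^e → u ≠ v ∧ u ≠ w ∧ v ≠ w) := by
  haveI : NeZero (p^e) := ⟨pow_ne_zero e hp.ne_zero⟩
  have hp3 : 3 ≤ p := by
    rcases hp.two_le.lt_or_eq with h | h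
    · omega
    · exact absurd h.symm hp2
  haveI : Fact (1 < p^e) := ⟨by
    calc 1 < p := by omega
    _ ≤ p^e := Nat.le_self_pow he.ne' p⟩
  have hoddpe : Odd (p^e) := (hp.odd_of_ne_two hp2).pow
  have hzero : ∀ a : ℕ, 0 < a → ((a : ℕ) : ZMod (p^e)) = 0 → p^e ≤ a := fun a ha h =>
    Nat.le_of_dvd ha ((ZMod.natCast_eq_zero_iff _ _).mp h)
  have h4 : (4 : ZMod (p^e)) ≠ 0 := by
    intro h
    have : p^e ∣ 4 := (ZMod.natCast_eq_zero_iff 4 _).mp (by exact_mod_cast h)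
    have hpdvd : p ∣ 4 := dvd_trans (dvd_pow_self p he.ne') this
    have : p ∣ 2^2 := by norm_num at hpdvd ⊢; exact hpdvd
    have := hp.dvd_of_dvd_pow this
    have := (Nat.prime_dvd_prime_iff_eq hp Nat.prime_two).mp this
    exact hp2 this
  have h3ne : 3 < p^e → (3 : ZMod (p^e)) ≠ 0 := by
    intro hlt h
    have := hzero 3 (by norm_num) (by exact_mod_cast h)
    omega
  have h2u : IsUnit (2 : ZMod (p^e)) := by
    rw [show (2 : ZMod (p^e)) = ((2:ℕ) : ZMod (p^e)) by norm_cast, ZMod.isUnit_iff_coprime]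
    exact Nat.coprime_two_left.mpr hoddpe
  by_cases hk : IsUnit k
  · -- k a unit : (2k, -2k, -k)
    obtain ⟨y, hy⟩ := isUnit_iff_exists_inv.mp hk
    refine ⟨2*k, -(2*k), -k, h2u.mul hk, (h2u.mul hk).neg, hk.neg, by ring, fun hlt => ⟨?_, ?_, ?_⟩⟩
    · intro h
      have h4k : (4 : ZMod (p^e)) * k = 0 := by linear_combination h
      have : (4 : ZMod (p^e)) = 0 := by
        calc (4 : ZMod (p^e)) = 4 * (k * y) := by rw [hy, mul_one]
        _ = (4 * k) * y := by ring
        _ = 0 := by rw [h4k, zero_mul]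
      exact h4 this
    · intro h
      have h3k : (3 : ZMod (p^e)) * k = 0 := by linear_combination h
      have : (3 : ZMod (p^e)) = 0 := by
        calc (3 : ZMod (p^e)) = 3 * (k * y) := by rw [hy, mul_one]
        _ = (3 * k) * y := by ring
        _ = 0 := by rw [h3k, zero_mul]
      exact h3ne hlt this
    · intro h
      have hk0 : k = 0 := by linear_combination -h
      rw [hk0] at hy
      simp at hy
  · -- k not a unit
    set π := ZMod.castHom (dvd_pow_self p he.ne') (ZMod p) with hπ
    haveI : Fact p.Prime := ⟨hp⟩
    have hπk : π k = 0 := by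
      by_contra h
      exact hk ((zmod_pp_unit_iff p e hp he k).mpr h)
    by_cases hp3' : p = 3
    · -- p = 3 : (k+1, k+4, k+5)
      subst hp3'
      refine ⟨k+1, k+4, k+5, ?_, ?_, ?_, by ring, fun hlt => ⟨?_, ?_, ?_⟩⟩
      · rw [zmod_pp_unit_iff 3 e hp he]
        simp only [map_add, ← hπ, hπk, map_one, zero_add]
        exact one_ne_zero
      · rw [zmod_pp_unit_iff 3 e hp he]
        rw [show (k+4 : ZMod (3^e)) = k + ((4:ℕ):ZMod (3^e)) by norm_cast]
        simp only [map_add, ← hπ, hπk, map_natCast, zero_add]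
        rw [Ne, ZMod.natCast_eq_zero_iff]
        norm_num
      · rw [zmod_pp_unit_iff 3 e hp he]
        rw [show (k+5 : ZMod (3^e)) = k + ((5:ℕ):ZMod (3^e)) by norm_cast]
        simp only [map_add, ← hπ, hπk, map_natCast, zero_add]
        rw [Ne, ZMod.natCast_eq_zero_iff]
        norm_num
      · intro h
        have : (3 : ZMod (3^e)) = 0 := by linear_combination -h
        exact h3ne hlt this
      · intro h
        have : (4 : ZMod (3^e)) = 0 := by linear_combination -h
        exact h4 this
      · intro h
        have : (1 : ZMod (3^e)) = 0 := by linear_combination -h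
        exact one_ne_zero this
    · -- p ≥ 5 : (k+1, 2, 3)
      have hp5 : 5 ≤ p := by
        by_contra h
        push_neg at h
        interval_cases p <;> simp_all (config := {decide := true})
      have h3u : IsUnit (3 : ZMod (p^e)) := by
        rw [show (3 : ZMod (p^e)) = ((3:ℕ) : ZMod (p^e)) by norm_cast, ZMod.isUnit_iff_coprime]
        rw [Nat.coprime_pow_right_iff he, Nat.coprime_comm, hp.coprime_iff_not_dvd]
        intro h
        have := Nat.le_of_dvd (by norm_num) h
        omega
      refine ⟨k+1, 2, 3, ?_, h2u, h3u, by ring, fun hlt => ⟨?_, ?_, ?_⟩⟩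
      · rw [zmod_pp_unit_iff p e hp he]
        simp only [map_add, ← hπ, hπk, map_one, zero_add]
        exact one_ne_zero
      · intro h
        have : k = 1 := by linear_combination h
        exact hk (this ▸ isUnit_one)
      · intro h
        have : k = 2 := by linear_combination h
        exact hk (this ▸ h2u)
      · intro h
        have : (1 : ZMod (p^e)) = 0 := by linear_combination -h
        exact one_ne_zero this

lemma key_all (m : ℕ) (hm : Odd m) (k : ZMod m) :
    ∃ u v w : ZMod m, IsUnit u ∧ IsUnit v ∧ IsUnit w ∧ u + v - w = k ∧
      (3 < m → u ≠ v ∧ u ≠ w ∧ v ≠ w) := by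
  induction m using Nat.recOnPosPrimePosCoprime with
  | prime_pow p n hp hn =>
    have hp2 : p ≠ 2 := by
      rintro rfl
      exact (Nat.not_odd_iff_even.mpr (Nat.even_pow.mpr ⟨even_two, hn.ne'⟩)) hm
    exact key_pp p n hp hp2 hn k
  | zero => simp [Nat.odd_iff] at hm
  | one =>
    refine ⟨0, 0, 0, ?_, ?_, ?_, Subsingleton.elim _ _, by omega⟩ <;>
      · rw [Subsingleton.elim (0 : ZMod 1) 1]; exact isUnit_one
  | coprime a b ha hb hab iha ihb =>
    rw [Nat.odd_mul] at hm
    obtain ⟨hma, hmb⟩ := hm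
    let e := ZMod.chineseRemainder hab
    obtain ⟨u₁, v₁, w₁, hu₁, hv₁, hw₁, hs₁, hd₁⟩ := iha hma (e k).1
    obtain ⟨u₂, v₂, w₂, hu₂, hv₂, hw₂, hs₂, hd₂⟩ := ihb hmb (e k).2
    refine ⟨e.symm (u₁, u₂), e.symm (v₁, v₂), e.symm (w₁, w₂), ?_, ?_, ?_, ?_, ?_⟩
    · obtain ⟨y₁, hy₁⟩ := isUnit_iff_exists_inv.mp hu₁
      obtain ⟨y₂, hy₂⟩ := isUnit_iff_exists_inv.mp hu₂
      exact isUnit_iff_exists_inv.mpr ⟨e.symm (y₁, y₂), by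
        rw [← map_mul, Prod.mk_mul_mk, hy₁, hy₂, ← Prod.one_eq_mk, map_one]⟩
    · obtain ⟨y₁, hy₁⟩ := isUnit_iff_exists_inv.mp hv₁
      obtain ⟨y₂, hy₂⟩ := isUnit_iff_exists_inv.mp hv₂
      exact isUnit_iff_exists_inv.mpr ⟨e.symm (y₁, y₂), by
        rw [← map_mul, Prod.mk_mul_mk, hy₁, hy₂, ← Prod.one_eq_mk, map_one]⟩
    · obtain ⟨y₁, hy₁⟩ := isUnit_iff_exists_inv.mp hw₁
      obtain ⟨y₂, hy₂⟩ := isUnit_iff_exists_inv.mp hw₂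
      exact isUnit_iff_exists_inv.mpr ⟨e.symm (y₁, y₂), by
        rw [← map_mul, Prod.mk_mul_mk, hy₁, hy₂, ← Prod.one_eq_mk, map_one]⟩
    · rw [← map_add, ← map_sub]
      have : ((u₁, u₂) + (v₁, v₂) - (w₁, w₂) : ZMod a × ZMod b) = e k := by
        apply Prod.ext <;> simp [hs₁, hs₂]
      rw [this, RingEquiv.symm_apply_apply]
    · intro _
      have h3ab : 3 < a ∨ 3 < b := by
        by_contra h
        push_neg at h
        have ha3 : a = 3 := by
          have := Nat.odd_iff.mp hma; omega
        have hb3 : b = 3 := by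
          have := Nat.odd_iff.mp hmb; omega
        rw [ha3, hb3] at hab
        simp [Nat.Coprime] at hab
      have inj : ∀ x y : ZMod a × ZMod b, e.symm x = e.symm y → x = y := fun x y h => by
        have := congrArg e h
        simpa using this
      rcases h3ab with h3 | h3
      · obtain ⟨d1, d2, d3⟩ := hd₁ h3
        exact ⟨fun h => d1 (congrArg Prod.fst (inj _ _ h)),
               fun h => d2 (congrArg Prod.fst (inj _ _ h)),
               fun h => d3 (congrArg Prod.fst (inj _ _ h))⟩
      · obtain ⟨d1, d2, d3⟩ := hd₂ h3
        exact ⟨fun h => d1 (congrArg Prod.snd (inj _ _ h)),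
               fun h => d2 (congrArg Prod.snd (inj _ _ h)),
               fun h => d3 (congrArg Prod.snd (inj _ _ h))⟩


open scoped Pointwise

/-- The set of elements of the form η₁η₂η₃⁻¹ with η₁, η₂, η₃ pairwise distinct
primitive m-th roots of unity. -/
def Lam3Star (m : ℕ) : Set ℂ :=
  {z : ℂ | ∃ a ∈ Phi m, ∃ b ∈ Phi m, ∃ c ∈ Phi m,
    a ≠ b ∧ a ≠ c ∧ b ≠ c ∧ a * b * c⁻¹ = z}

theorem Lam3Star_eq (m : ℕ) (hm : Odd m) (h3 : 3 < m) :
    Lam3Star m = Rset m := by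
  haveI : NeZero m := ⟨by omega⟩
  ext z
  simp only [Lam3Star, Rset, Phi, Set.mem_setOf_eq]
  constructor
  · rintro ⟨a, ha, b, hb, c, hc, -, -, -, rfl⟩
    rw [mul_pow, mul_pow, inv_pow, ha.pow_eq_one, hb.pow_eq_one, hc.pow_eq_one]
    norm_num
  · intro hz
    set ζ := Complex.exp (2 * Real.pi * Complex.I / m) with hζdef
    have hζ : IsPrimitiveRoot ζ m := Complex.isPrimitiveRoot_exp m (by omega)
    have hζ0 : ζ ≠ 0 := hζ.ne_zero (by omega)
    obtain ⟨k, hk, hkz⟩ := hζ.eq_pow_of_pow_eq_one hz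
    obtain ⟨u, v, w, hu, hv, hw, hsum, hdist⟩ := key_all m hm ((k : ZMod m))
    obtain ⟨d1, d2, d3⟩ := hdist h3
    have prim : ∀ x : ZMod m, IsUnit x → IsPrimitiveRoot (ζ ^ x.val) m := fun x hx =>
      hζ.pow_of_coprime x.val ((zmod_isUnit_iff_coprime_val m x).mp hx)
    have powinj : ∀ x y : ZMod m, ζ ^ x.val = ζ ^ y.val → x = y := fun x y h =>
      ZMod.val_injective m (hζ.pow_inj (ZMod.val_lt x) (ZMod.val_lt y) h)
    have hvalcast : ∀ x : ZMod m, ((x.val : ℕ) : ZMod m) = x := fun x => by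
      simp [ZMod.natCast_val, ZMod.cast_id]
    have hmod : u.val + v.val ≡ k + w.val [MOD m] := by
      rw [← ZMod.natCast_eq_natCast_iff]
      push_cast
      rw [hvalcast, hvalcast, hvalcast]
      linear_combination hsum
    have powmod : ∀ a : ℕ, ζ ^ a = ζ ^ (a % m) := fun a => by
      conv_lhs => rw [← Nat.div_add_mod a m]
      rw [pow_add, pow_mul, hζ.pow_eq_one, one_pow, one_mul]
    have hkey : ζ ^ u.val * ζ ^ v.val = z * ζ ^ w.val := by
      rw [← pow_add, ← hkz, ← pow_add, powmod (u.val + v.val), powmod (k + w.val), hmod]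
    refine ⟨ζ ^ u.val, prim u hu, ζ ^ v.val, prim v hv, ζ ^ w.val, prim w hw,
      fun h => d1 (powinj _ _ h), fun h => d2 (powinj _ _ h), fun h => d3 (powinj _ _ h), ?_⟩
    have hw0 : (ζ ^ w.val) ≠ 0 := pow_ne_zero _ hζ0
    field_simp [hkey]
    rw [hkey, mul_comm]
end

section
/- Let m be an odd natural number with φ(m) > 6, and let 3 < i ≤ φ(m) − 3. Then every element that is a product of 3 pairwise distinct primitive m-th roots of unity is also a product of i pairwise distinct primitive m-th roots of unity, i.e., Λ₃(Φ(m)) ⊆ Λᵢ(Φ(m)). -/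
open scoped Pointwise

/-- The set of products of `i` pairwise distinct primitive `m`-th roots of unity. -/
def Lam (m i : ℕ) : Set ℂ :=
  {z : ℂ | ∃ s : Finset ℂ, ↑s ⊆ Phi m ∧ s.card = i ∧ ∏ x ∈ s, x = z}

/-- `k` is a sum of `j` pairwise distinct units of `ZMod m`. -/
def Sig (m j : ℕ) (k : ZMod m) : Prop :=
  ∃ t : Finset (ZMod m), (∀ x ∈ t, IsUnit x) ∧ t.card = j ∧ ∑ x ∈ t, x = k

section ZModPart

variable {m : ℕ}

lemma isUnit_two (hm : Odd m) : IsUnit (2 : ZMod m) := by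
  have h2 : ((2 : ℕ) : ZMod m) = (2 : ZMod m) := by norm_cast
  rw [← h2, ZMod.isUnit_iff_coprime]
  refine (Nat.Prime.coprime_iff_not_dvd Nat.prime_two).mpr ?_
  rw [Nat.odd_iff] at hm
  omega

lemma not_dvd_small (hm : Odd m) (h11 : 11 ≤ m) {n : ℕ} (h0 : 0 < n) (h12 : n ≤ 12)
    (hn11 : n ≠ 11) : ¬ m ∣ n := by
  intro h
  rcases h with ⟨c, rfl⟩
  rw [Nat.odd_iff] at hm
  rcases Nat.lt_or_ge c 2 with hc | hc
  · interval_cases c <;> omega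
  · nlinarith

/-- units cast from powers of two (up to sign) -/
lemma isUnit_intCast_pow2 (hm : Odd m) (n : ℤ) (j : ℕ) (h : n = 2 ^ j ∨ n = -2 ^ j) :
    IsUnit ((n : ZMod m)) := by
  have h2 : IsUnit ((2 : ZMod m) ^ j) := (isUnit_two hm).pow j
  rcases h with rfl | rfl
  · have : (((2:ℤ) ^ j : ℤ) : ZMod m) = (2 : ZMod m) ^ j := by push_cast; ring
    rw [this]; exact h2
  · have : ((-2 ^ j : ℤ) : ZMod m) = -((2 : ZMod m) ^ j) := by push_cast; ring
    rw [this]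
    exact h2.neg

lemma intCast_mul_ne_zero (hm : Odd m) (h11 : 11 ≤ m) {u : ZMod m} (hu : IsUnit u)
    {n : ℤ} (hn : ¬ ((m : ℤ) ∣ n)) : (n : ZMod m) * u ≠ 0 := by
  intro h
  have h0 : ((n : ZMod m)) = 0 := (hu.mul_left_eq_zero).mp h
  exact hn ((ZMod.intCast_zmod_eq_zero_iff_dvd n m).mp h0)

lemma smul_ne (hm : Odd m) (h11 : 11 ≤ m) {u : ZMod m} (hu : IsUnit u)
    (p q : ℤ) (n : ℕ) (hpq : p - q = (n : ℤ)) (h0 : 0 < n) (h12 : n ≤ 12) (hn11 : n ≠ 11) :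
    (p : ZMod m) * u ≠ (q : ZMod m) * u := by
  intro h
  have hd : ¬ ((m : ℤ) ∣ (p - q)) := by
    rw [hpq]
    exact_mod_cast fun hdvd => (not_dvd_small hm h11 h0 h12 hn11) (by exact_mod_cast hdvd)
  apply intCast_mul_ne_zero hm h11 hu hd
  push_cast
  linear_combination h

lemma sig4_mk {a b c d k : ZMod m} (ha : IsUnit a) (hb : IsUnit b) (hc : IsUnit c)
    (hd : IsUnit d) (hab : a ≠ b) (hac : a ≠ c) (had : a ≠ d) (hbc : b ≠ c) (hbd : b ≠ d)
    (hcd : c ≠ d) (hs : a + b + c + d = k) : Sig m 4 k := by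
  refine ⟨{a, b, c, d}, ?_, ?_, ?_⟩
  · intro x hx
    simp only [Finset.mem_insert, Finset.mem_singleton] at hx
    rcases hx with rfl | rfl | rfl | rfl <;> assumption
  · rw [Finset.card_insert_of_notMem (by simp [hab, hac, had]),
      Finset.card_insert_of_notMem (by simp [hbc, hbd]),
      Finset.card_insert_of_notMem (by simp [hcd]), Finset.card_singleton]
  · rw [Finset.sum_insert (by simp [hab, hac, had]),
      Finset.sum_insert (by simp [hbc, hbd]),
      Finset.sum_insert (by simp [hcd]), Finset.sum_singleton, ← hs]
    ring

/-- Any unit is a sum of 4 distinct units: `u = 8u + (-4u) + (-2u) + (-u)`. -/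
lemma sig4_of_unit (hm : Odd m) (h11 : 11 ≤ m) {u : ZMod m} (hu : IsUnit u) :
    Sig m 4 u := by
  have u8 : IsUnit ((8 : ℤ) : ZMod m) := isUnit_intCast_pow2 hm 8 3 (by norm_num)
  have u4 : IsUnit ((-4 : ℤ) : ZMod m) := isUnit_intCast_pow2 hm (-4) 2 (by norm_num)
  have u2 : IsUnit ((-2 : ℤ) : ZMod m) := isUnit_intCast_pow2 hm (-2) 1 (by norm_num)
  have u1 : IsUnit ((-1 : ℤ) : ZMod m) := isUnit_intCast_pow2 hm (-1) 0 (by norm_num)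
  refine sig4_mk (u8.mul hu) (u4.mul hu) (u2.mul hu) (u1.mul hu)
    (smul_ne hm h11 hu 8 (-4) 12 (by norm_num) (by norm_num) (by norm_num) (by norm_num))
    (smul_ne hm h11 hu 8 (-2) 10 (by norm_num) (by norm_num) (by norm_num) (by norm_num))
    (smul_ne hm h11 hu 8 (-1) 9 (by norm_num) (by norm_num) (by norm_num) (by norm_num))
    (smul_ne hm h11 hu (-2) (-4) 2 (by norm_num) (by norm_num) (by norm_num) (by norm_num)).symm
    (smul_ne hm h11 hu (-1) (-4) 3 (by norm_num) (by norm_num) (by norm_num) (by norm_num)).symm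
    (smul_ne hm h11 hu (-1) (-2) 1 (by norm_num) (by norm_num) (by norm_num) (by norm_num)).symm
    ?_
  push_cast
  ring

/-- `3u + d` is a sum of 4 distinct units, for any units `u, d`. -/
lemma sig4_3ud (hm : Odd m) (h11 : 11 ≤ m) {u d : ZMod m} (hu : IsUnit u) (hd : IsUnit d) :
    Sig m 4 (((3 : ℤ) : ZMod m) * u + d) := by
  have u8 : IsUnit ((8 : ℤ) : ZMod m) := isUnit_intCast_pow2 hm 8 3 (by norm_num)
  have u4 : IsUnit ((4 : ℤ) : ZMod m) := isUnit_intCast_pow2 hm 4 2 (by norm_num)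
  have un4 : IsUnit ((-4 : ℤ) : ZMod m) := isUnit_intCast_pow2 hm (-4) 2 (by norm_num)
  have un2 : IsUnit ((-2 : ℤ) : ZMod m) := isUnit_intCast_pow2 hm (-2) 1 (by norm_num)
  have un1 : IsUnit ((-1 : ℤ) : ZMod m) := isUnit_intCast_pow2 hm (-1) 0 (by norm_num)
  have u1 : IsUnit ((1 : ℤ) : ZMod m) := isUnit_intCast_pow2 hm 1 0 (by norm_num)
  by_cases h1 : d = ((4 : ℤ) : ZMod m) * u ∨ d = ((1 : ℤ) : ZMod m) * u
  · -- use {8u, -4u, -u, d}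
    refine sig4_mk (u8.mul hu) (un4.mul hu) (un1.mul hu) hd
      (smul_ne hm h11 hu 8 (-4) 12 (by norm_num) (by norm_num) (by norm_num) (by norm_num))
      (smul_ne hm h11 hu 8 (-1) 9 (by norm_num) (by norm_num) (by norm_num) (by norm_num))
      ?_ 
      (smul_ne hm h11 hu (-1) (-4) 3 (by norm_num) (by norm_num) (by norm_num) (by norm_num)).symm
      ?_ ?_ ?_
    · rcases h1 with rfl | rfl
      · exact smul_ne hm h11 hu 8 4 4 (by norm_num) (by norm_num) (by norm_num) (by norm_num)
      · exact smul_ne hm h11 hu 8 1 7 (by norm_num) (by norm_num) (by norm_num) (by norm_num)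
    · rcases h1 with rfl | rfl
      · exact (smul_ne hm h11 hu 4 (-4) 8 (by norm_num) (by norm_num) (by norm_num) (by norm_num)).symm
      · exact (smul_ne hm h11 hu 1 (-4) 5 (by norm_num) (by norm_num) (by norm_num) (by norm_num)).symm
    · rcases h1 with rfl | rfl
      · exact (smul_ne hm h11 hu 4 (-1) 5 (by norm_num) (by norm_num) (by norm_num) (by norm_num)).symm
      · exact (smul_ne hm h11 hu 1 (-1) 2 (by norm_num) (by norm_num) (by norm_num) (by norm_num)).symm
    · push_cast; ring
  · by_cases h2 : d = ((-2 : ℤ) : ZMod m) * u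
    · -- then 3u + d = u, use the gadget
      have hk : ((3 : ℤ) : ZMod m) * u + d = u := by rw [h2]; push_cast; ring
      rw [hk]
      exact sig4_of_unit hm h11 hu
    · -- use {4u, -2u, u, d}
      push_neg at h1
      refine sig4_mk (u4.mul hu) (un2.mul hu) (u1.mul hu) hd
        (smul_ne hm h11 hu 4 (-2) 6 (by norm_num) (by norm_num) (by norm_num) (by norm_num))
        (smul_ne hm h11 hu 4 1 3 (by norm_num) (by norm_num) (by norm_num) (by norm_num))
        (fun h => h1.1 h.symm)
        (smul_ne hm h11 hu 1 (-2) 3 (by norm_num) (by norm_num) (by norm_num) (by norm_num)).symm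
        (fun h => h2 h.symm)
        (fun h => h1.2 h.symm)
        ?_
      push_cast; ring

/-- The key parity-changing step: a sum of 3 distinct units is a sum of 4 distinct units. -/
lemma sig3_to_sig4 (hm : Odd m) (h11 : 11 ≤ m) {k : ZMod m} (h : Sig m 3 k) : Sig m 4 k := by
  obtain ⟨t, hunit, hcard, hsum⟩ := h
  rw [Finset.card_eq_three] at hcard
  obtain ⟨x, y, z, hxy, hxz, hyz, rfl⟩ := hcard
  have hx : IsUnit x := hunit x (by simp)
  have hy : IsUnit y := hunit y (by simp)
  have hz : IsUnit z := hunit z (by simp)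
  have hk : x + y + z = k := by
    rw [Finset.sum_insert (by simp [hxy, hxz]), Finset.sum_insert (by simp [hyz]),
      Finset.sum_singleton] at hsum
    linear_combination hsum
  have u2 : IsUnit ((2 : ℤ) : ZMod m) := isUnit_intCast_pow2 hm 2 1 (by norm_num)
  have un1 : IsUnit ((-1 : ℤ) : ZMod m) := isUnit_intCast_pow2 hm (-1) 0 (by norm_num)
  by_cases hb : x = ((2 : ℤ) : ZMod m) * z ∨ x = ((-1 : ℤ) : ZMod m) * z ∨
      y = ((2 : ℤ) : ZMod m) * z ∨ y = ((-1 : ℤ) : ZMod m) * z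
  · rcases hb with h' | h' | h' | h'
    · -- x = 2z : k = 3z + y
      have hk' : ((3 : ℤ) : ZMod m) * z + y = k := by
        rw [h'] at hk; push_cast at hk ⊢; linear_combination hk
      exact hk' ▸ sig4_3ud hm h11 hz hy
    · -- x = -z : k = y
      have hk' : y = k := by rw [h'] at hk; push_cast at hk; linear_combination hk
      exact hk' ▸ sig4_of_unit hm h11 hy
    · -- y = 2z : k = 3z + x
      have hk' : ((3 : ℤ) : ZMod m) * z + x = k := by
        rw [h'] at hk; push_cast at hk ⊢; linear_combination hk
      exact hk' ▸ sig4_3ud hm h11 hz hx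
    · -- y = -z : k = x
      have hk' : x = k := by rw [h'] at hk; push_cast at hk; linear_combination hk
      exact hk' ▸ sig4_of_unit hm h11 hx
  · push_neg at hb
    obtain ⟨h1, h2, h3, h4⟩ := hb
    refine sig4_mk hx hy (u2.mul hz) (un1.mul hz) hxy h1 h2 h3 h4
      (smul_ne hm h11 hz 2 (-1) 3 (by norm_num) (by norm_num) (by norm_num) (by norm_num))
      ?_
    push_cast
    linear_combination hk

/-- The finset of units of `ZMod m`. -/
noncomputable def Uset (m : ℕ) [NeZero m] : Finset (ZMod m) :=
  Finset.univ.image (fun u : (ZMod m)ˣ => (u : ZMod m))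

lemma mem_Uset [NeZero m] {x : ZMod m} : x ∈ Uset m ↔ IsUnit x := by
  simp [Uset, IsUnit]

lemma card_Uset [NeZero m] : (Uset m).card = m.totient := by
  rw [Uset, Finset.card_image_of_injective _ Units.val_injective, Finset.card_univ,
    ZMod.card_units_eq_totient]

lemma sum_Uset (hm : Odd m) [NeZero m] : ∑ x ∈ Uset m, x = 0 := by
  have himg : (Uset m).image (fun x => -x) = Uset m := by
    apply Finset.Subset.antisymm
    · intro x hx
      simp only [Finset.mem_image] at hx
      obtain ⟨y, hy, rfl⟩ := hx
      rw [mem_Uset] at hy ⊢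
      exact hy.neg
    · intro x hx
      rw [mem_Uset] at hx
      simp only [Finset.mem_image]
      exact ⟨-x, mem_Uset.mpr hx.neg, by ring⟩
  have h1 : ∑ x ∈ Uset m, x = ∑ x ∈ Uset m, (-x) := by
    conv_lhs => rw [← himg]
    rw [Finset.sum_image (fun a _ b _ h => neg_injective h)]
  have h2 : ∑ x ∈ Uset m, (-x) = -∑ x ∈ Uset m, x := Finset.sum_neg_distrib (fun x => x)
  have h3 : (2 : ZMod m) * (∑ x ∈ Uset m, x) = 0 := by
    rw [two_mul]
    nth_rewrite 1 [h1]
    rw [h2]; ring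
  exact ((isUnit_two hm).mul_right_eq_zero).mp h3

/-- Pair step: adjoin `{u, -u}`. -/
lemma sig_step (hm : Odd m) (h11 : 11 ≤ m) [NeZero m] {j : ℕ} {k : ZMod m}
    (h : Sig m j k) (hj : 2 * j < (Uset m).card) : Sig m (j + 2) k := by
  haveI : Fact (1 < m) := ⟨by omega⟩
  obtain ⟨t, hunit, hcard, hsum⟩ := h
  classical
  set B : Finset (ZMod m) := t ∪ t.image (fun x : ZMod m => -x) with hB
  have hBsub : B ⊆ Uset m := by
    intro x hx
    rw [hB, Finset.mem_union] at hx
    rcases hx with hx | hx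
    · exact mem_Uset.mpr (hunit x hx)
    · simp only [Finset.mem_image] at hx
      obtain ⟨y, hy, rfl⟩ := hx
      exact mem_Uset.mpr (hunit y hy).neg
  have hBcard : B.card < (Uset m).card := by
    have h1 : B.card ≤ t.card + (t.image (fun x : ZMod m => -x)).card :=
      Finset.card_union_le _ _
    have h2 : (t.image (fun x : ZMod m => -x)).card ≤ t.card := Finset.card_image_le
    omega
  have : ¬ (Uset m ⊆ B) := fun hsub => absurd (Finset.card_le_card hsub) (by omega)
  obtain ⟨u, huU, huB⟩ := Finset.not_subset.mp this
  have hu : IsUnit u := mem_Uset.mp huU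
  have hut : u ∉ t := fun h' => huB (by rw [hB]; exact Finset.mem_union_left _ h')
  have hnut : -u ∉ t := by
    intro h'
    apply huB
    rw [hB]
    apply Finset.mem_union_right
    exact Finset.mem_image.mpr ⟨-u, h', by ring⟩
  have hune : u ≠ -u := by
    intro h'
    have h0 : (2 : ZMod m) * u = 0 := by rw [two_mul]; nth_rewrite 2 [h']; ring
    have hu0 : u = 0 := ((isUnit_two hm).mul_right_eq_zero).mp h0
    rw [hu0] at hu
    rw [isUnit_zero_iff] at hu
    have : (1 : ZMod m) ≠ 0 := one_ne_zero
    exact this hu.symm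
  refine ⟨insert u (insert (-u) t), ?_, ?_, ?_⟩
  · intro x hx
    rcases Finset.mem_insert.mp hx with rfl | hx
    · exact hu
    · rcases Finset.mem_insert.mp hx with rfl | hx
      · exact hu.neg
      · exact hunit x hx
  · rw [Finset.card_insert_of_notMem (by simp [hune, hut]),
      Finset.card_insert_of_notMem hnut, hcard]
  · rw [Finset.sum_insert (by simp [hune, hut]), Finset.sum_insert hnut, hsum]
    ring

/-- Complement symmetry. -/
lemma sig_compl (hm : Odd m) [NeZero m] {j : ℕ} {k : ZMod m}
    (h : Sig m j k) : Sig m ((Uset m).card - j) k := by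
  obtain ⟨t, hunit, hcard, hsum⟩ := h
  classical
  have htU : t ⊆ Uset m := fun x hx => mem_Uset.mpr (hunit x hx)
  refine ⟨(Uset m \ t).image (fun x => -x), ?_, ?_, ?_⟩
  · intro x hx
    simp only [Finset.mem_image] at hx
    obtain ⟨y, hy, rfl⟩ := hx
    exact (mem_Uset.mp (Finset.mem_sdiff.mp hy).1).neg
  · rw [Finset.card_image_of_injective _ neg_injective, Finset.card_sdiff_of_subset htU, hcard]
  · rw [Finset.sum_image (fun a _ b _ h => neg_injective h), Finset.sum_neg_distrib,
      Finset.sum_sdiff_eq_sub htU, sum_Uset hm, hsum]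
    ring

/-- Main combinatorial theorem in `ZMod m`. -/
lemma sig_main (hm : Odd m) (h11 : 11 ≤ m) [NeZero m] (hU : 6 < (Uset m).card)
    {k : ZMod m} (h3 : Sig m 3 k) {i : ℕ} (hi1 : 3 < i) (hi2 : i ≤ (Uset m).card - 3) :
    Sig m i k := by
  set U := (Uset m).card with hUdef
  have chain : ∀ j, 3 ≤ j → 2 * j < U + 4 → Sig m j k := by
    intro j
    induction j using Nat.strong_induction_on with
    | _ j ih =>
      intro h3j hj
      rcases Nat.lt_or_ge j 5 with hj5 | hj5
      · interval_cases j
        · exact h3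
        · exact sig3_to_sig4 hm h11 h3
      · have hprev : Sig m (j - 2) k := ih (j - 2) (by omega) (by omega) (by omega)
        have hstep := sig_step hm h11 hprev (by omega)
        have he : j - 2 + 2 = j := by omega
        rwa [he] at hstep
  by_cases hc : 2 * i < U + 4
  · exact chain i (by omega) hc
  · have hiU : i ≤ U := by omega
    have h1 : Sig m (U - i) k := chain (U - i) (by omega) (by omega)
    have h2 := sig_compl hm h1
    have he : U - (U - i) = i := by omega
    rwa [he] at h2

end ZModPart

section Bridge

variable {m : ℕ} [NeZero m] {ζ : ℂ}

/-- Exponential map from `ZMod m` to roots of unity. -/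
noncomputable def eMap (m : ℕ) (ζ : ℂ) : ZMod m → ℂ := fun j => ζ ^ j.val

lemma eMap_pow_mod (hζ : IsPrimitiveRoot ζ m) (x : ℕ) : ζ ^ (x % m) = ζ ^ x := by
  conv_rhs => rw [← Nat.div_add_mod x m, pow_add, pow_mul, hζ.pow_eq_one, one_pow, one_mul]

lemma eMap_add (hζ : IsPrimitiveRoot ζ m) (a b : ZMod m) :
    eMap m ζ (a + b) = eMap m ζ a * eMap m ζ b := by
  unfold eMap
  rw [ZMod.val_add, eMap_pow_mod hζ, pow_add]

lemma eMap_inj (hζ : IsPrimitiveRoot ζ m) : Function.Injective (eMap m ζ) := by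
  intro a b h
  exact ZMod.val_injective m (hζ.pow_inj (ZMod.val_lt a) (ZMod.val_lt b) h)

lemma eMap_sum (hζ : IsPrimitiveRoot ζ m) (t : Finset (ZMod m)) :
    eMap m ζ (∑ x ∈ t, x) = ∏ x ∈ t, eMap m ζ x := by
  classical
  induction t using Finset.cons_induction with
  | empty =>
    simp [eMap, ZMod.val_zero]
  | cons a s ha ih =>
    rw [Finset.sum_cons, Finset.prod_cons, eMap_add hζ, ih]

lemma eMap_primitive (hζ : IsPrimitiveRoot ζ m) {j : ZMod m} (hj : IsUnit j) :
    IsPrimitiveRoot (eMap m ζ j) m := by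
  have hm0 : 0 < m := Nat.pos_of_ne_zero (NeZero.ne m)
  have hcast : ((j.val : ℕ) : ZMod m) = j := ZMod.natCast_rightInverse j
  have hj' : IsUnit ((j.val : ℕ) : ZMod m) := by rw [hcast]; exact hj
  have hco : Nat.Coprime j.val m := (ZMod.isUnit_iff_coprime j.val m).mp hj' 
  exact (hζ.pow_iff_coprime hm0 j.val).mpr hco

lemma eMap_surj (hζ : IsPrimitiveRoot ζ m) {x : ℂ} (hx : IsPrimitiveRoot x m) :
    ∃ j : ZMod m, IsUnit j ∧ eMap m ζ j = x := by
  have hm0 : 0 < m := Nat.pos_of_ne_zero (NeZero.ne m)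
  obtain ⟨n, hn, hnx⟩ := hζ.eq_pow_of_pow_eq_one hx.pow_eq_one
  refine ⟨(n : ZMod m), ?_, ?_⟩
  · rw [ZMod.isUnit_iff_coprime]
    exact (hζ.pow_iff_coprime hm0 n).mp (hnx ▸ hx)
  · unfold eMap
    rw [ZMod.val_natCast, eMap_pow_mod hζ, hnx]

end Bridge

theorem Lam3_subset_Lami (m i : ℕ) (hm : Odd m) (hφ : 6 < Nat.totient m)
    (hi₁ : 3 < i) (hi₂ : i ≤ Nat.totient m - 3) :
    Lam m 3 ⊆ Lam m i := by
  have h11 : 11 ≤ m := by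
    by_contra h
    push_neg at h
    interval_cases m <;> revert hm hφ <;> decide
  haveI : NeZero m := ⟨by omega⟩
  have hζ : IsPrimitiveRoot (Complex.exp (2 * Real.pi * Complex.I / m)) m :=
    Complex.isPrimitiveRoot_exp m (by omega)
  set ζ := Complex.exp (2 * Real.pi * Complex.I / m) with hζdef
  intro z hz
  obtain ⟨s, hsub, hcard, hprod⟩ := hz
  rw [Finset.card_eq_three] at hcard
  obtain ⟨x, y, w, hxy, hxw, hyw, rfl⟩ := hcard
  have hxP : IsPrimitiveRoot x m := hsub (by simp)
  have hyP : IsPrimitiveRoot y m := hsub (by simp)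
  have hwP : IsPrimitiveRoot w m := hsub (by simp)
  obtain ⟨jx, hjxu, hjxe⟩ := eMap_surj hζ hxP
  obtain ⟨jy, hjyu, hjye⟩ := eMap_surj hζ hyP
  obtain ⟨jw, hjwu, hjwe⟩ := eMap_surj hζ hwP
  have hjxy : jx ≠ jy := fun h => hxy (by rw [← hjxe, ← hjye, h])
  have hjxw : jx ≠ jw := fun h => hxw (by rw [← hjxe, ← hjwe, h])
  have hjyw : jy ≠ jw := fun h => hyw (by rw [← hjye, ← hjwe, h])
  set k : ZMod m := jx + jy + jw with hkdef
  have hsig3 : Sig m 3 k := by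
    refine ⟨{jx, jy, jw}, ?_, ?_, ?_⟩
    · intro a ha
      simp only [Finset.mem_insert, Finset.mem_singleton] at ha
      rcases ha with rfl | rfl | rfl <;> assumption
    · rw [Finset.card_insert_of_notMem (by simp [hjxy, hjxw]),
        Finset.card_insert_of_notMem (by simp [hjyw]), Finset.card_singleton]
    · rw [Finset.sum_insert (by simp [hjxy, hjxw]), Finset.sum_insert (by simp [hjyw]),
        Finset.sum_singleton, hkdef]
      ring
  have hek : eMap m ζ k = z := by
    rw [hkdef, eMap_add hζ, eMap_add hζ, hjxe, hjye, hjwe, ← hprod]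
    rw [Finset.prod_insert (by simp [hxy, hxw]), Finset.prod_insert (by simp [hyw]),
      Finset.prod_singleton]
    ring
  have hU : 6 < (Uset m).card := by rw [card_Uset]; exact hφ
  have hi2' : i ≤ (Uset m).card - 3 := by rw [card_Uset]; exact hi₂
  have hsigi : Sig m i k := sig_main hm h11 hU hsig3 hi₁ hi2'
  obtain ⟨t, htu, htc, hts⟩ := hsigi
  classical
  refine ⟨t.image (eMap m ζ), ?_, ?_, ?_⟩
  · intro a ha
    simp only [Finset.coe_image, Set.mem_image, Finset.mem_coe] at ha
    obtain ⟨j, hj, rfl⟩ := ha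
    exact eMap_primitive hζ (htu j hj)
  · rw [Finset.card_image_of_injective _ (eMap_inj hζ), htc]
  · rw [Finset.prod_image (fun a _ b _ h => eMap_inj hζ h), ← eMap_sum hζ, hts, hek]
end

section
/- Let m be an odd natural number with m ∉ {1, 3, 5, 9} and set k = φ(m). Then there exist primitive m-th roots of unity η₁, …, η_{k/2} such that the k elements η₁^{±1}, …, η_{k/2}^{±1} are pairwise distinct and η₁⋯η_{k/2} = 1. -/
open scoped Pointwise

/-- `Delta m` is the set of products `η₁ ⋯ η_{φ(m)/2}` where the `ηᵢ` are primitive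
`m`-th roots of unity such that `η₁^{±1}, …, η_{φ(m)/2}^{±1}` are pairwise distinct
(equivalently no two chosen elements, equal or not, multiply to `1`). -/
def Delta (m : ℕ) : Set ℂ :=
  {z : ℂ | ∃ s : Finset ℂ, ↑s ⊆ Phi m ∧ s.card = Nat.totient m / 2 ∧
    (∀ x ∈ s, ∀ y ∈ s, x * y ≠ 1) ∧ ∏ x ∈ s, x = z}


-- subset sums cover lemma
lemma cover_lemma (S : Finset ℕ) (hS : ∀ a ∈ S, a ≤ 1 + ∑ b ∈ S.filter (· < a), b) :
    ∀ s ≤ ∑ b ∈ S, b, ∃ B ⊆ S, ∑ b ∈ B, b = s := by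
  induction S using Finset.induction_on_max with
  | empty => intro s hs; simp at hs; exact ⟨∅, by simp [hs]⟩
  | insert a S ha ih =>
    have haS : a ∉ S := fun h => lt_irrefl a (ha a h)
    intro s hs
    have hfa : (insert a S).filter (· < a) = S := by
      ext x
      simp only [Finset.mem_filter, Finset.mem_insert]
      constructor
      · rintro ⟨h1 | h1, h2⟩
        · omega
        · exact h1
      · intro hx; exact ⟨Or.inr hx, ha x hx⟩
    have hS' : ∀ x ∈ S, x ≤ 1 + ∑ b ∈ S.filter (· < x), b := by
      intro x hx
      have := hS x (Finset.mem_insert_of_mem hx)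
      have : (insert a S).filter (· < x) = S.filter (· < x) := by
        ext y
        simp only [Finset.mem_filter, Finset.mem_insert]
        constructor
        · rintro ⟨h1 | h1, h2⟩
          · exfalso; have := ha x hx; omega
          · exact ⟨h1, h2⟩
        · rintro ⟨h1, h2⟩; exact ⟨Or.inr h1, h2⟩
      have h2 := hS x (Finset.mem_insert_of_mem hx)
      rwa [this] at h2
    rw [Finset.sum_insert haS] at hs
    by_cases hc : s ≤ ∑ b ∈ S, b
    · obtain ⟨B, hB1, hB2⟩ := ih hS' s hc
      exact ⟨B, hB1.trans (Finset.subset_insert a S), hB2⟩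
    · have haa := hS a (Finset.mem_insert_self a S)
      rw [hfa] at haa
      have h1 : a ≤ s := by omega
      obtain ⟨B, hB1, hB2⟩ := ih hS' (s - a) (by omega)
      refine ⟨insert a B, Finset.insert_subset_insert a hB1, ?_⟩
      rw [Finset.sum_insert (fun h => haS (hB1 h))]
      omega

lemma coprime_sub (m a : ℕ) (ha : a ≤ m) (h : Nat.Coprime a m) : Nat.Coprime (m - a) m := by
  have h1 : Nat.Coprime (m - a) a := (Nat.coprime_sub_self_left ha).mpr (Nat.coprime_comm.mp h)
  have h2 : Nat.Coprime (m - a) (a + (m - a)) := Nat.coprime_add_self_right.mpr h1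
  rwa [show a + (m - a) = m from by omega] at h2

lemma card_U (m : ℕ) (hm : Odd m) (hm5 : 5 ≤ m) :
    2 * ((Finset.Ico 1 ((m+1)/2)).filter (fun a => Nat.Coprime a m)).card = Nat.totient m := by
  obtain ⟨j, hj⟩ := hm
  set h2 := (m+1)/2 with hh2
  set U := (Finset.Ico 1 h2).filter (fun a => Nat.Coprime a m) with hU
  set V := (Finset.Ico h2 m).filter (fun a => Nat.Coprime a m) with hV
  have hUV : U.card = V.card := by
    apply Finset.card_nbij (fun a => m - a)
    · intro a haU
      simp only [hU, hV, Finset.mem_coe, Finset.mem_filter, Finset.mem_Ico] at *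
      refine ⟨⟨by omega, by omega⟩, coprime_sub m a (by omega) haU.2⟩
    · intro a ha b hb hab
      simp only [hU, Finset.coe_filter, Finset.mem_Ico, Set.mem_setOf_eq] at ha hb
      simp only at hab
      omega
    · intro v hv
      simp only [hV, Finset.coe_filter, Finset.mem_Ico, Set.mem_setOf_eq] at hv
      refine ⟨m - v, ?_, by simp only; omega⟩
      simp only [hU, Finset.coe_filter, Finset.mem_Ico, Set.mem_setOf_eq]
      exact ⟨⟨by omega, by omega⟩, coprime_sub m v (by omega) hv.2⟩
  have hdisj : Disjoint U V := by
    apply Finset.disjoint_filter_filter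
    apply Finset.Ico_disjoint_Ico_consecutive
  have hunion : U ∪ V = (Finset.range m).filter (fun a => Nat.Coprime a m) := by
    rw [hU, hV, ← Finset.filter_union, Finset.Ico_union_Ico_eq_Ico (by omega) (by omega)]
    ext x
    simp only [Finset.mem_filter, Finset.mem_Ico, Finset.mem_range]
    constructor
    · rintro ⟨⟨_, h2⟩, h3⟩; exact ⟨h2, h3⟩
    · rintro ⟨h1, h3⟩
      refine ⟨⟨?_, h1⟩, h3⟩
      rcases Nat.eq_zero_or_pos x with rfl | hx
      · exfalso; simp [Nat.Coprime] at h3; omega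
      · exact hx
  have htot : Nat.totient m = ((Finset.range m).filter (fun a => Nat.Coprime a m)).card := by
    rw [Nat.totient_eq_card_coprime]
    congr 1
    apply Finset.filter_congr
    intro x _
    simp [Nat.coprime_comm]
  rw [htot, ← hunion, Finset.card_union_of_disjoint hdisj]
  omega

lemma sum_pow2 (k : ℕ) : ∑ i ∈ Finset.range k, 2^i = 2^k - 1 := by
  induction k with
  | zero => simp
  | succ n ih =>
    rw [Finset.sum_range_succ, ih]
    have : 0 < 2^n := Nat.pow_pos (by norm_num)
    rw [pow_succ]; omega

-- powers of 2 strictly below a, inside U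
lemma pow2_subset (m a : ℕ) (hm : Odd m) (ha2 : 2 ≤ a) (hah : a < (m+1)/2) :
    (Finset.range (Nat.log 2 (a-1) + 1)).image (2 ^ ·) ⊆
      (Finset.Ico 1 ((m+1)/2)).filter (fun b => Nat.Coprime b m) ∧
    ∀ b ∈ (Finset.range (Nat.log 2 (a-1) + 1)).image (2 ^ ·), b < a := by
  have hkey : ∀ i ∈ Finset.range (Nat.log 2 (a-1) + 1), 2^i < a := by
    intro i hi
    simp only [Finset.mem_range] at hi
    calc 2^i ≤ 2^(Nat.log 2 (a-1)) := Nat.pow_le_pow_right (by norm_num) (by omega)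
    _ ≤ a - 1 := Nat.pow_log_le_self 2 (by omega)
    _ < a := by omega
  constructor
  · intro b hb
    simp only [Finset.mem_image] at hb
    obtain ⟨i, hi, rfl⟩ := hb
    simp only [Finset.mem_filter, Finset.mem_Ico]
    refine ⟨⟨Nat.one_le_two_pow, lt_trans (hkey i hi) hah⟩, Nat.Coprime.pow_left i hm.coprime_two_left⟩
  · intro b hb
    simp only [Finset.mem_image] at hb
    obtain ⟨i, hi, rfl⟩ := hb
    exact hkey i hi

lemma U_prop (m : ℕ) (hm : Odd m) :
    ∀ a ∈ (Finset.Ico 1 ((m+1)/2)).filter (fun b => Nat.Coprime b m),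
      a ≤ 1 + ∑ b ∈ ((Finset.Ico 1 ((m+1)/2)).filter (fun b => Nat.Coprime b m)).filter (· < a), b := by
  intro a haU
  simp only [Finset.mem_filter, Finset.mem_Ico] at haU
  rcases Nat.lt_or_ge a 2 with h | h
  · omega
  · set k := Nat.log 2 (a-1) + 1 with hk
    obtain ⟨hsub, hlt⟩ := pow2_subset m a hm h haU.1.2
    have hsub2 : (Finset.range k).image (2 ^ ·) ⊆
        ((Finset.Ico 1 ((m+1)/2)).filter (fun b => Nat.Coprime b m)).filter (· < a) := by
      intro b hb
      exact Finset.mem_filter.mpr ⟨hsub hb, hlt b hb⟩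
    have hsum : ∑ b ∈ (Finset.range k).image (2 ^ ·), b = 2^k - 1 := by
      rw [Finset.sum_image (fun x _ y _ h => Nat.pow_right_injective (le_refl 2) h)]
      exact sum_pow2 k
    have hmono := Finset.sum_le_sum_of_subset hsub2 (f := id)
    have h2k : a - 1 < 2^k := Nat.lt_pow_succ_log_self (by norm_num) (a-1)
    simp only [id] at hmono
    rw [hsum] at hmono
    omega

lemma sum_pow2' (k : ℕ) : ∑ i ∈ Finset.range k, 2^i = 2^k - 1 := by
  induction k with
  | zero => simp
  | succ n ih =>
    rw [Finset.sum_range_succ, ih]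
    have : 0 < 2^n := Nat.pow_pos (by norm_num)
    rw [pow_succ]; omega

lemma pow2_mod15 (j : ℕ) : 2^j % 15 = 2^(j % 4) % 15 := by
  induction j using Nat.strong_induction_on with
  | _ j ih =>
    rcases Nat.lt_or_ge j 4 with h | h
    · rw [Nat.mod_eq_of_lt h]
    · have he : 2^j = 2^(j-4) * 16 := by
        calc 2^j = 2^(j-4+4) := by rw [Nat.sub_add_cancel h]
        _ = 2^(j-4) * 2^4 := by rw [pow_add]
        _ = 2^(j-4) * 16 := by norm_num
      rw [he, Nat.mul_mod, ih (j-4) (by omega), show j % 4 = (j - 4) % 4 by omega]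
      have hr : (j-4) % 4 < 4 := Nat.mod_lt _ (by norm_num)
      set r := (j - 4) % 4
      interval_cases r <;> decide

lemma not_pow2 (i e : ℕ) (he : e = 3 ∨ e = 5) : 2^i ≠ e := by
  intro hc
  rcases Nat.lt_or_ge i 3 with h | h
  · interval_cases i <;> omega
  · have : 2^3 ≤ 2^i := Nat.pow_le_pow_right (by norm_num) h
    omega

lemma T_ge (m : ℕ) (hm : Odd m) (hm7 : 7 ≤ m) (hm9 : m ≠ 9) :
    m - 1 ≤ ∑ b ∈ (Finset.Ico 1 ((m+1)/2)).filter (fun b => Nat.Coprime b m), b := by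
  obtain ⟨jodd, hjodd⟩ := hm
  set U := (Finset.Ico 1 ((m+1)/2)).filter (fun b => Nat.Coprime b m) with hUdef
  set h2 := (m-1)/2 with hh2
  have hh2' : (m+1)/2 = h2 + 1 := by omega
  have hh23 : 3 ≤ h2 := by omega
  set k := Nat.log 2 h2 with hk
  have hklow : 2^k ≤ h2 := Nat.pow_log_le_self 2 (by omega)
  have hkhigh : h2 < 2^(k+1) := Nat.lt_pow_succ_log_self (by norm_num) h2
  set P := (Finset.range (k+1)).image (2 ^ ·) with hP
  have hPsub : P ⊆ U := by
    intro b hb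
    simp only [hP, Finset.mem_image, Finset.mem_range] at hb
    obtain ⟨i, hi, rfl⟩ := hb
    have : 2^i ≤ 2^k := Nat.pow_le_pow_right (by norm_num) (by omega)
    simp only [hUdef, Finset.mem_filter, Finset.mem_Ico]
    exact ⟨⟨Nat.one_le_two_pow, by omega⟩,
      Nat.Coprime.pow_left i (Odd.coprime_two_left ⟨jodd, hjodd⟩)⟩
  have hPsum : ∑ b ∈ P, b = 2^(k+1) - 1 := by
    rw [hP, Finset.sum_image (fun x _ y _ h => Nat.pow_right_injective (le_refl 2) h)]
    exact sum_pow2' (k+1)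
  by_cases hcase : h2 ∈ P
  · -- h2 is a power of 2, namely 2^k
    have hh2pow : h2 = 2^k := by
      simp only [hP, Finset.mem_image, Finset.mem_range] at hcase
      obtain ⟨i, hi, hie⟩ := hcase
      have h1 : 2^i ≤ 2^k := Nat.pow_le_pow_right (by norm_num) (by omega)
      omega
    obtain ⟨e, he35, hecop, heh2⟩ :
        ∃ e, (e = 3 ∨ e = 5) ∧ Nat.Coprime e m ∧ e ≤ h2 := by
      by_cases h3 : 3 ∣ m
      · refine ⟨5, Or.inr rfl, (Nat.prime_five.coprime_iff_not_dvd).mpr ?_, by omega⟩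
        intro h5
        have h15 : 15 ∣ m := (Nat.coprime_primes Nat.prime_three Nat.prime_five |>.mpr
          (by norm_num)).mul_dvd_of_dvd_of_dvd h3 h5
        have hme : m = 2^(k+1) + 1 := by
          have : 2^(k+1) = 2 * 2^k := by ring
          omega
        have hpm := pow2_mod15 (k+1)
        have hr : (k+1) % 4 < 4 := Nat.mod_lt _ (by norm_num)
        set r := (k+1) % 4
        interval_cases r <;> norm_num at hpm <;> omega
      · exact ⟨3, Or.inl rfl, (Nat.prime_three.coprime_iff_not_dvd).mpr h3, by omega⟩
    have heP : e ∉ P := by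
      simp only [hP, Finset.mem_image, Finset.mem_range]
      rintro ⟨i, -, hi⟩
      exact not_pow2 i e he35 hi
    have hins : insert e P ⊆ U := by
      apply Finset.insert_subset _ hPsub
      simp only [hUdef, Finset.mem_filter, Finset.mem_Ico]
      exact ⟨⟨by omega, by omega⟩, hecop⟩
    have hmono := Finset.sum_le_sum_of_subset hins (f := id)
    rw [Finset.sum_insert heP] at hmono
    simp only [id] at hmono
    rw [hPsum] at hmono
    have : 2^(k+1) = 2 * 2^k := by ring
    omega
  · have hins : insert h2 P ⊆ U := by
      apply Finset.insert_subset _ hPsub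
      simp only [hUdef, Finset.mem_filter, Finset.mem_Ico]
      refine ⟨⟨by omega, by omega⟩, ?_⟩
      have hd1 : Nat.gcd h2 m ∣ 1 := by
        have hd : Nat.gcd h2 m ∣ m := Nat.gcd_dvd_right _ _
        have hd2 : Nat.gcd h2 m ∣ h2 := Nat.gcd_dvd_left _ _
        have := Nat.dvd_sub hd (hd2.mul_left 2)
        simpa [show m - 2 * h2 = 1 by omega] using this
      exact Nat.eq_one_of_dvd_one hd1
    have hmono := Finset.sum_le_sum_of_subset hins (f := id)
    rw [Finset.sum_insert hcase] at hmono
    simp only [id] at hmono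
    rw [hPsum] at hmono
    omega

open scoped Pointwise


theorem one_mem_Delta (m : ℕ) (hm : Odd m) (h : m ∉ ({1, 3, 5, 9} : Set ℕ)) :
    (1 : ℂ) ∈ Delta m := by
  simp only [Set.mem_insert_iff, Set.mem_singleton_iff, not_or] at h
  obtain ⟨h1, h3, h5, h9⟩ := h
  obtain ⟨jodd, hjodd⟩ := hm
  have hm7 : 7 ≤ m := by omega
  set U := (Finset.Ico 1 ((m+1)/2)).filter (fun a => Nat.Coprime a m) with hUdef
  set T := ∑ b ∈ U, b with hT
  have hcard : 2 * U.card = Nat.totient m := card_U m ⟨jodd, hjodd⟩ (by omega)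
  have hTge : m - 1 ≤ T := T_ge m ⟨jodd, hjodd⟩ hm7 h9
  set h2 := (m-1)/2 with hh2
  have hh2' : (m+1)/2 = h2 + 1 := by omega
  set c := (T * ((m+1)/2)) % m with hc
  have hclt : c < m := Nat.mod_lt _ (by omega)
  have hkey : 2 * c ≡ T [MOD m] := by
    have e1 : (c : ℕ) ≡ T * ((m+1)/2) [MOD m] := Nat.mod_modEq _ m
    have e2 : 2 * c ≡ 2 * (T * ((m+1)/2)) [MOD m] := e1.mul_left 2
    have e3 : 2 * (T * ((m+1)/2)) = T * m + T := by
      have : 2 * ((m+1)/2) = m + 1 := by omega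
      calc 2 * (T * ((m+1)/2)) = T * (2 * ((m+1)/2)) := by ring
      _ = T * (m + 1) := by rw [this]
      _ = T * m + T := by ring
    have e4 : T * m + T ≡ T [MOD m] := by
      show (T * m + T) % m = T % m
      rw [add_comm, Nat.add_mul_mod_self_right]
    exact e2.trans (e3 ▸ e4)
  -- find B ⊆ U with sum c
  obtain ⟨B, hBU, hBsum⟩ := cover_lemma U (U_prop m ⟨jodd, hjodd⟩) c (by omega)
  -- facts about U elements
  have hUelt : ∀ a ∈ U, 1 ≤ a ∧ a ≤ h2 ∧ Nat.Coprime a m := by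
    intro a ha
    simp only [hUdef, Finset.mem_filter, Finset.mem_Ico] at ha
    exact ⟨ha.1.1, by omega, ha.2⟩
  -- the final exponent set
  set A := (U \ B) ∪ B.image (fun b => m - b) with hA
  have himelt : ∀ x ∈ B.image (fun b => m - b), h2 + 1 ≤ x ∧ x ≤ m - 1 ∧ Nat.Coprime x m := by
    intro x hx
    simp only [Finset.mem_image] at hx
    obtain ⟨b, hb, rfl⟩ := hx
    obtain ⟨hb1, hb2, hb3⟩ := hUelt b (hBU hb)
    exact ⟨by omega, by omega, coprime_sub m b (by omega) hb3⟩
  have hdisj : Disjoint (U \ B) (B.image (fun b => m - b)) := by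
    rw [Finset.disjoint_left]
    intro x hx hx2
    obtain ⟨_, hxh2, _⟩ := hUelt x (Finset.mem_sdiff.mp hx).1
    obtain ⟨hge, _, _⟩ := himelt x hx2
    omega
  have hinj : Set.InjOn (fun b => m - b) ↑B := by
    intro a ha b hb hab
    obtain ⟨_, ha2, _⟩ := hUelt a (hBU ha)
    obtain ⟨_, hb2, _⟩ := hUelt b (hBU hb)
    simp only at hab
    omega
  have hcardA : A.card = U.card := by
    rw [hA, Finset.card_union_of_disjoint hdisj, Finset.card_image_of_injOn hinj,
      Finset.card_sdiff_of_subset hBU]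
    have := Finset.card_le_card hBU
    omega
  have hAelt : ∀ a ∈ A, 1 ≤ a ∧ a ≤ m - 1 ∧ Nat.Coprime a m := by
    intro a ha
    rw [hA, Finset.mem_union] at ha
    rcases ha with ha | ha
    · obtain ⟨h1', h2', h3'⟩ := hUelt a (Finset.mem_sdiff.mp ha).1
      exact ⟨h1', by omega, h3'⟩
    · obtain ⟨h1', h2', h3'⟩ := himelt a ha
      exact ⟨by omega, h2', h3'⟩
  -- no two elements sum to m
  have hnosum : ∀ x ∈ A, ∀ y ∈ A, x + y ≠ m := by
    intro x hx y hy hxy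
    rw [hA, Finset.mem_union] at hx hy
    rcases hx with hx | hx <;> rcases hy with hy | hy
    · obtain ⟨_, hx2, _⟩ := hUelt x (Finset.mem_sdiff.mp hx).1
      obtain ⟨_, hy2, _⟩ := hUelt y (Finset.mem_sdiff.mp hy).1
      omega
    · -- x ∈ U \ B, y = m - b
      obtain ⟨b, hb, rfl⟩ := Finset.mem_image.mp hy
      obtain ⟨_, hb2, _⟩ := hUelt b (hBU hb)
      have hxb : x = b := by omega
      exact (Finset.mem_sdiff.mp hx).2 (hxb ▸ hb)
    · obtain ⟨b, hb, rfl⟩ := Finset.mem_image.mp hx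
      obtain ⟨_, hb2, _⟩ := hUelt b (hBU hb)
      have hyb : y = b := by omega
      exact (Finset.mem_sdiff.mp hy).2 (hyb ▸ hb)
    · obtain ⟨_, hx1, _⟩ := himelt x hx
      obtain ⟨_, hy1, _⟩ := himelt y hy
      have := himelt x hx
      have := himelt y hy
      omega
  -- sum of A is divisible by m
  set SA := ∑ a ∈ A, a with hSA
  have hsum_sdiff : ∑ a ∈ U \ B, a + c = T := by
    rw [← hBsum]; exact Finset.sum_sdiff hBU
  have hsum_im : ∑ x ∈ B.image (fun b => m - b), x + c = B.card * m := by
    rw [Finset.sum_image hinj, ← hBsum, ← Finset.sum_add_distrib]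
    calc ∑ b ∈ B, (m - b + b) = ∑ _b ∈ B, m := by
          apply Finset.sum_congr rfl
          intro b hb
          obtain ⟨_, hb2, _⟩ := hUelt b (hBU hb)
          omega
    _ = B.card * m := by rw [Finset.sum_const, smul_eq_mul]
  have hSAeq : SA + 2 * c = T + B.card * m := by
    rw [hSA, hA, Finset.sum_union hdisj]
    omega
  have hdvd : m ∣ SA := by
    have e5 : SA + 2 * c ≡ T [MOD m] := by
      rw [hSAeq]
      show (T + B.card * m) % m = T % m
      rw [Nat.add_mul_mod_self_right]
    have e6 : SA + 2 * c ≡ 0 + 2 * c [MOD m] := by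
      calc SA + 2*c ≡ T [MOD m] := e5
      _ ≡ 2 * c [MOD m] := hkey.symm
      _ = 0 + 2 * c := by ring
    have := Nat.ModEq.add_right_cancel' (2 * c) e6
    exact (Nat.modEq_zero_iff_dvd).mp this
  -- pass to ℂ
  set ζ := Complex.exp (2 * Real.pi * Complex.I / m) with hzeta
  have hζ : IsPrimitiveRoot ζ m := Complex.isPrimitiveRoot_exp m (by omega)
  have hinjC : Set.InjOn (fun a => ζ ^ a) ↑A := by
    intro a ha b hb hab
    obtain ⟨_, ha2, _⟩ := hAelt a ha
    obtain ⟨_, hb2, _⟩ := hAelt b hb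
    exact hζ.pow_inj (by omega) (by omega) hab
  refine ⟨A.image (fun a => ζ ^ a), ?_, ?_, ?_, ?_⟩
  · intro x hx
    simp only [Finset.coe_image, Set.mem_image, Finset.mem_coe] at hx
    obtain ⟨a, ha, rfl⟩ := hx
    obtain ⟨_, _, hcop⟩ := hAelt a ha
    exact hζ.pow_of_coprime a hcop
  · rw [Finset.card_image_of_injOn hinjC, hcardA]
    omega
  · intro x hx y hy hxy
    obtain ⟨a, ha, rfl⟩ := Finset.mem_image.mp hx
    obtain ⟨b, hb, rfl⟩ := Finset.mem_image.mp hy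
    rw [← pow_add] at hxy
    have hdvd2 : m ∣ a + b := (hζ.pow_eq_one_iff_dvd (a+b)).mp hxy
    obtain ⟨a1, a2, _⟩ := hAelt a ha
    obtain ⟨b1, b2, _⟩ := hAelt b hb
    have habm : a + b = m :=
      Nat.eq_of_dvd_of_lt_two_mul (by omega) hdvd2 (by omega)
    exact hnosum a ha b hb habm
  · rw [Finset.prod_image hinjC, Finset.prod_pow_eq_pow_sum]
    exact (hζ.pow_eq_one_iff_dvd SA).mpr hdvd
end

section
/- Let m > 1 be an odd natural number with k = φ(m). Then every primitive m-th root of unity lies in Δ(m); that is, for every ζ ∈ Φ(m) there exist η₁, …, η_{k/2} ∈ Φ(m) with η₁^{±1}, …, η_{k/2}^{±1} pairwise distinct and η₁⋯η_{k/2} = ζ. -/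
open scoped Pointwise

open Finset

/-- Every odd integer of absolute value at most `2^(j+1) - 1` is a signed sum of the
powers `2^0, …, 2^j`. -/
private lemma signed_sum : ∀ (j : ℕ) (z : ℤ), Odd z → |z| ≤ 2 ^ (j + 1) - 1 →
    ∃ ε : ℕ → ℤ, (∀ i, ε i = 1 ∨ ε i = -1) ∧ ∑ i ∈ range (j + 1), ε i * 2 ^ i = z := by
  intro j
  induction j with
  | zero =>
    intro z hz hb
    rw [abs_le] at hb
    rw [Int.odd_iff] at hz
    have hz' : z = 1 ∨ z = -1 := by omega
    refine ⟨fun _ => z, fun _ => hz', ?_⟩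
    simp
  | succ j ih =>
    intro z hz hb
    have hA : (0:ℤ) < 2 ^ (j+1) := by positivity
    have hz0 : z ≠ 0 := by rintro rfl; simp at hz
    set σ : ℤ := if 0 ≤ z then 1 else -1 with hσ
    have hσ' : σ = 1 ∨ σ = -1 := by
      rw [hσ]; split_ifs <;> simp
    have h2e : Even ((2:ℤ) ^ (j+1)) := ⟨2 ^ j, by ring⟩
    have heven : Even (σ * 2 ^ (j+1)) := h2e.mul_left σ
    have hodd : Odd (z - σ * 2 ^ (j+1)) := hz.sub_even heven
    have hb' : |z - σ * 2 ^ (j+1)| ≤ 2 ^ (j+1) - 1 := by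
      have hAA : (2:ℤ) ^ (j+1+1) = 2 * 2 ^ (j+1) := by ring
      rw [hAA] at hb
      rw [Int.odd_iff] at hz
      rw [abs_le] at hb ⊢
      rw [hσ]
      split_ifs with h <;> constructor <;> omega
    obtain ⟨ε, hε, hs⟩ := ih _ hodd hb'
    refine ⟨fun i => if i = j+1 then σ else ε i, ?_, ?_⟩
    · intro i; dsimp only; split_ifs; exacts [hσ', hε i]
    · rw [Finset.sum_range_succ]
      have heq : ∑ i ∈ range (j+1), (if i = j+1 then σ else ε i) * 2^i
          = ∑ i ∈ range (j+1), ε i * 2^i := by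
        refine Finset.sum_congr rfl fun i hi => ?_
        rw [if_neg (Nat.ne_of_lt (mem_range.mp hi))]
      rw [heq, hs]
      simp [sub_add_cancel]

private lemma exists_rep (m : ℕ) (hm : Odd m) (h1 : 1 < m) :
    ∃ A : Finset (ZMod m), (∀ a ∈ A, IsUnit a) ∧ (∀ a ∈ A, ∀ b ∈ A, a + b ≠ 0) ∧
      (∀ u : ZMod m, IsUnit u → u ∈ A ∨ -u ∈ A) ∧ ∑ a ∈ A, a = 1 := by
  classical
  haveI : NeZero m := ⟨by omega⟩
  haveI : Fact (1 < m) := ⟨h1⟩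
  have hm3 : 3 ≤ m := by rcases hm with ⟨k, hk⟩; omega
  set j := Nat.log 2 (m - 2) with hjdef
  have hj1 : 2 ^ j ≤ m - 2 := Nat.pow_log_le_self 2 (by omega)
  have hj2 : m - 2 < 2 ^ (j + 1) := Nat.lt_pow_succ_log_self (by norm_num) _
  have hcop2 : Nat.Coprime 2 m := Nat.coprime_two_left.mpr hm
  have hU2 : IsUnit (2 : ZMod m) := by
    have := (ZMod.isUnit_iff_coprime 2 m).mpr hcop2
    simpa using this
  have hUpow : ∀ i : ℕ, IsUnit ((2:ZMod m) ^ i) := fun i => hU2.pow _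
  have hcopm : ∀ k : ℕ, Nat.Coprime m (2 ^ k) := fun k => Nat.Coprime.pow_right k hcop2.symm
  have hne1 : (1 : ZMod m) ≠ -1 := by
    intro h
    have h2 : ((2:ℕ) : ZMod m) = 0 := by push_cast; linear_combination h
    rw [ZMod.natCast_eq_zero_iff] at h2
    have := Nat.le_of_dvd (by norm_num) h2
    omega
  -- divisibility helpers
  have hdvd1 : ∀ d, d ≤ j → ¬ m ∣ 2 ^ d + 1 := by
    intro d hd hdvd
    have h2 : (2:ℕ) ^ d ≤ 2 ^ j := Nat.pow_le_pow_right (by norm_num) hd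
    have := Nat.le_of_dvd (by positivity) hdvd
    omega
  have hdvd2 : ∀ d, d ≤ j → m ∣ 2 ^ d - 1 → d = 0 := by
    intro d hd hdvd
    by_contra h
    have hd1 : 1 ≤ d := by omega
    have h2 : (2:ℕ) ^ 1 ≤ 2 ^ d := Nat.pow_le_pow_right (by norm_num) hd1
    have h3 : (2:ℕ) ^ d ≤ 2 ^ j := Nat.pow_le_pow_right (by norm_num) hd
    have := Nat.le_of_dvd (by omega) hdvd
    omega
  -- distinctness of powers of two mod m
  have hA2' : ∀ i i', i ≤ i' → i' ≤ j → (2:ZMod m) ^ i = 2 ^ i' → i = i' := by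
    intro i i' hle hi' h
    have h2 : (2:ZMod m) ^ i * 1 = 2 ^ i * 2 ^ (i' - i) := by
      rw [mul_one, ← pow_add, Nat.add_sub_cancel' hle]
      exact h
    have h3 : (1 : ZMod m) = 2 ^ (i' - i) := (hUpow i).mul_left_cancel h2
    have h4 : ((2 ^ (i' - i) : ℕ) : ZMod m) = ((1 : ℕ) : ZMod m) := by
      push_cast
      rw [← h3]
    have h5 : 2 ^ (i' - i) ≡ 1 [MOD m] := (ZMod.natCast_eq_natCast_iff _ _ _).mp h4
    have h6 : m ∣ 2 ^ (i' - i) - 1 :=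
      (Nat.modEq_iff_dvd' (Nat.one_le_two_pow)).mp h5.symm
    have := hdvd2 _ (by omega) h6
    omega
  have hA2 : ∀ i i', i ≤ j → i' ≤ j → (2:ZMod m) ^ i = 2 ^ i' → i = i' := by
    intro i i' hi hi' h
    rcases le_total i i' with hle | hle
    · exact hA2' i i' hle hi' h
    · exact (hA2' i' i hle hi h.symm).symm
  have hB2' : ∀ i i', i ≤ i' → i' ≤ j → (2:ZMod m) ^ i ≠ -(2:ZMod m) ^ i' := by
    intro i i' hle hi' h
    have h2 : ((2 ^ i + 2 ^ i' : ℕ) : ZMod m) = 0 := by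
      push_cast
      rw [h]
      ring
    rw [ZMod.natCast_eq_zero_iff] at h2
    have hfac : 2 ^ i + 2 ^ i' = (2 ^ (i' - i) + 1) * 2 ^ i := by
      rw [add_mul, one_mul, ← pow_add, Nat.sub_add_cancel hle, Nat.add_comm]
    rw [hfac] at h2
    exact hdvd1 (i' - i) (by omega) ((hcopm i).dvd_of_dvd_mul_right h2)
  have hB2 : ∀ i i', i ≤ j → i' ≤ j → (2:ZMod m) ^ i ≠ -(2:ZMod m) ^ i' := by
    intro i i' hi hi' h
    rcases le_total i i' with hle | hle
    · exact hB2' i i' hle hi' h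
    · exact hB2' i' i hle hi (by linear_combination h)
  -- the canonical half-set of units avoiding powers of two orbits
  set P : Finset (ZMod m) := (range (j+1)).image (fun i => (2:ZMod m) ^ i) with hPdef
  have hmemP : ∀ a : ZMod m, a ∈ P ↔ ∃ i, i ≤ j ∧ a = 2 ^ i := by
    intro a
    simp only [hPdef, mem_image, mem_range]
    constructor
    · rintro ⟨i, hi, rfl⟩; exact ⟨i, by omega, rfl⟩
    · rintro ⟨i, hi, rfl⟩; exact ⟨i, by omega, rfl⟩
  set R : Finset (ZMod m) :=
    univ.filter (fun a => IsUnit a ∧ 2 * a.val < m ∧ a ∉ P ∧ -a ∉ P) with hRdef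
  have hmemR : ∀ a : ZMod m,
      a ∈ R ↔ IsUnit a ∧ 2 * a.val < m ∧ a ∉ P ∧ -a ∉ P := by
    intro a
    simp [hRdef]
  have hunit_ne : ∀ a : ZMod m, IsUnit a → a ≠ 0 := fun a ha => ha.ne_zero
  have hvalneg : ∀ a : ZMod m, a ≠ 0 → (-a).val = m - a.val := by
    intro a ha
    rw [ZMod.neg_val, if_neg ha]
  have hR2 : ∀ a ∈ R, ∀ b ∈ R, a + b ≠ 0 := by
    intro a ha b hb hab
    rw [hmemR] at ha hb
    have hba : b = -a := by linear_combination hab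
    have ha0 : a ≠ 0 := hunit_ne a ha.1
    have h1' : (-a).val = m - a.val := hvalneg a ha0
    have hva : a.val ≠ 0 := fun h => ha0 ((ZMod.val_eq_zero a).mp h)
    have hvb := hb.2.1
    rw [hba, h1'] at hvb
    have := ha.2.1
    have := ZMod.val_lt a
    omega
  have hR3 : ∀ u : ZMod m, IsUnit u → u ∉ P → -u ∉ P → u ∈ R ∨ -u ∈ R := by
    intro u hu huP huP'
    have hu0 : u ≠ 0 := hunit_ne u hu
    have hval : (-u).val = m - u.val := hvalneg u hu0
    have hvu : u.val ≠ 0 := fun h => hu0 ((ZMod.val_eq_zero u).mp h)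
    have hvlt : u.val < m := ZMod.val_lt u
    have hne : 2 * u.val ≠ m := by
      rw [Nat.odd_iff] at hm
      omega
    rcases lt_or_gt_of_ne hne with h | h
    · left; rw [hmemR]; exact ⟨hu, h, huP, huP'⟩
    · right; rw [hmemR]
      refine ⟨hu.neg, by omega, huP', by rwa [neg_neg]⟩
  -- the complementary set Q, adjusted so that its sum is not 1
  obtain ⟨Q, hQ1, hQ2, hQ3, hQs⟩ : ∃ Q : Finset (ZMod m),
      (∀ a ∈ Q, IsUnit a ∧ a ∉ P ∧ -a ∉ P) ∧
      (∀ a ∈ Q, ∀ b ∈ Q, a + b ≠ 0) ∧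
      (∀ u : ZMod m, IsUnit u → u ∉ P → -u ∉ P → u ∈ Q ∨ -u ∈ Q) ∧
      ∑ a ∈ Q, a ≠ 1 := by
    by_cases hs : ∑ a ∈ R, a = 1
    · -- R is nonempty; flip one element
      have hRne : R.Nonempty := by
        rcases Finset.eq_empty_or_nonempty R with h | h
        · rw [h, Finset.sum_empty] at hs
          exact absurd hs zero_ne_one
        · exact h
      obtain ⟨q, hq⟩ := hRne
      have hqR := (hmemR q).mp hq
      have hq0 : q ≠ 0 := hunit_ne q hqR.1
      refine ⟨insert (-q) (R.erase q), ?_, ?_, ?_, ?_⟩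
      · intro a ha
        rcases Finset.mem_insert.mp ha with rfl | ha'
        · exact ⟨hqR.1.neg, hqR.2.2.2, by rw [neg_neg]; exact hqR.2.2.1⟩
        · have := (hmemR a).mp (Finset.mem_of_mem_erase ha')
          exact ⟨this.1, this.2.2.1, this.2.2.2⟩
      · intro a ha b hb hab
        rcases Finset.mem_insert.mp ha with rfl | ha' <;>
          rcases Finset.mem_insert.mp hb with hb'' | hb'
        · -- a = -q, b = -q
          rw [hb''] at hab
          have h2q : (2:ZMod m) * q = 0 := by linear_combination -hab
          exact (hU2.mul hqR.1).ne_zero h2q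
        · -- a = -q, b ∈ erase
          have : b = q := by linear_combination hab
          exact (Finset.mem_erase.mp hb').1 this
        · -- b = -q, a ∈ erase
          rw [hb''] at hab
          have : a = q := by linear_combination hab
          exact (Finset.mem_erase.mp ha').1 this
        · exact hR2 a (Finset.mem_of_mem_erase ha') b (Finset.mem_of_mem_erase hb') hab
      · intro u hu huP huP'
        rcases hR3 u hu huP huP' with h | h
        · by_cases hu_q : u = q
          · right; rw [hu_q]; exact Finset.mem_insert_self _ _
          · left; exact Finset.mem_insert_of_mem (Finset.mem_erase.mpr ⟨hu_q, h⟩)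
        · by_cases hu_q : -u = q
          · left
            have : u = -q := by rw [← hu_q, neg_neg]
            rw [this]; exact Finset.mem_insert_self _ _
          · right; exact Finset.mem_insert_of_mem (Finset.mem_erase.mpr ⟨hu_q, h⟩)
      · have hnotmem : -q ∉ R.erase q := by
          intro h
          exact hR2 q hq (-q) (Finset.mem_of_mem_erase h) (by ring)
        rw [Finset.sum_insert hnotmem]
        have herase : ∑ a ∈ R.erase q, a = (∑ a ∈ R, a) - q :=
          Finset.sum_erase_eq_sub hq
        rw [herase, hs]
        intro h
        have h2q : (2:ZMod m) * q = 0 := by linear_combination -h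
        exact (hU2.mul hqR.1).ne_zero h2q
    · exact ⟨R, fun a ha => by
        have := (hmemR a).mp ha; exact ⟨this.1, this.2.2.1, this.2.2.2⟩,
        hR2, hR3, hs⟩
  -- the target for the signed powers of two
  set t : ZMod m := 1 - ∑ a ∈ Q, a with htdef
  have ht : t ≠ 0 := sub_ne_zero.mpr (Ne.symm hQs)
  have hv0 : t.val ≠ 0 := fun h => ht ((ZMod.val_eq_zero t).mp h)
  have hvm : t.val < m := ZMod.val_lt t
  have hvt : ((t.val : ℕ) : ZMod m) = t := ZMod.natCast_zmod_val t
  have hmodd : Odd (m : ℤ) := by exact_mod_cast hm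
  -- find an odd integer representative of t of small absolute value
  obtain ⟨z, hzodd, hzb, hzt⟩ : ∃ z : ℤ, Odd z ∧ |z| ≤ 2 ^ (j+1) - 1 ∧
      ((z : ℤ) : ZMod m) = t := by
    have hj2' : ((m:ℕ):ℤ) - 2 < 2 ^ (j+1) := by
      have : ((m - 2 : ℕ) : ℤ) < ((2 ^ (j+1) : ℕ) : ℤ) := by exact_mod_cast hj2
      push_cast at this
      omega
    rcases Nat.even_or_odd t.val with he | ho
    · refine ⟨(t.val : ℤ) - m, ?_, ?_, ?_⟩
      · exact (Int.even_coe_nat _ |>.mpr he).sub_odd hmodd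
      · rw [abs_le]
        have h2 : 2 ≤ t.val := by
          rcases he with ⟨c, hc⟩; omega
        have : ((t.val : ℕ) : ℤ) < m := by exact_mod_cast hvm
        constructor <;> omega
      · push_cast
        rw [ZMod.natCast_self]
        rw [hvt]
        ring
    · refine ⟨(t.val : ℤ), by exact_mod_cast ho, ?_, by push_cast [hvt]; rfl⟩
      rw [abs_le]
      have hne : t.val ≠ m - 1 := by
        intro h
        rw [Nat.odd_iff] at ho hm
        omega
      have : ((t.val : ℕ) : ℤ) < m := by exact_mod_cast hvm
      constructor <;> omega
  obtain ⟨ε, hε, hsz⟩ := signed_sum j z hzodd hzb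
  have hcov : ∑ i ∈ range (j+1), ((ε i * 2 ^ i : ℤ) : ZMod m) = t := by
    rw [show (∑ i ∈ range (j+1), ((ε i * 2 ^ i : ℤ) : ZMod m))
        = ((∑ i ∈ range (j+1), ε i * 2 ^ i : ℤ) : ZMod m) by push_cast; ring]
    rw [hsz, hzt]
  set f : ℕ → ZMod m := fun i => ((ε i * 2 ^ i : ℤ) : ZMod m) with hfdef
  have hf : ∀ i, (f i = (2:ZMod m) ^ i ∧ ε i = 1) ∨ (f i = -(2:ZMod m) ^ i ∧ ε i = -1) := by
    intro i
    rcases hε i with h | h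
    · left; refine ⟨?_, h⟩; rw [hfdef]; push_cast [h]; ring
    · right; refine ⟨?_, h⟩; rw [hfdef]; push_cast [h]; ring
  have hfinj : ∀ i ∈ range (j+1), ∀ i' ∈ range (j+1), f i = f i' → i = i' := by
    intro i hi i' hi' h
    have hij : i ≤ j := by have := mem_range.mp hi; omega
    have hij' : i' ≤ j := by have := mem_range.mp hi'; omega
    rcases hf i with ⟨h1', _⟩ | ⟨h1', _⟩ <;> rcases hf i' with ⟨h2', _⟩ | ⟨h2', _⟩ <;>
        rw [h1', h2'] at h
    · exact hA2 i i' hij hij' h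
    · exact absurd h (hB2 i i' hij hij')
    · exact absurd h.symm (hB2 i' i hij' hij)
    · exact hA2 i i' hij hij' (neg_inj.mp h)
  have hfadd : ∀ i ∈ range (j+1), ∀ i' ∈ range (j+1), f i + f i' ≠ 0 := by
    intro i hi i' hi' h
    have hij : i ≤ j := by have := mem_range.mp hi; omega
    have hij' : i' ≤ j := by have := mem_range.mp hi'; omega
    rcases hf i with ⟨h1', he1⟩ | ⟨h1', he1⟩ <;> rcases hf i' with ⟨h2', he2⟩ | ⟨h2', he2⟩ <;>
        rw [h1', h2'] at h
    · exact hB2 i i' hij hij' (by linear_combination h)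
    · have : i = i' := hA2 i i' hij hij' (by linear_combination h)
      rw [this] at he1; rw [he1] at he2; norm_num at he2
    · have : i = i' := hA2 i i' hij hij' (by linear_combination -h)
      rw [this] at he1; rw [he1] at he2; norm_num at he2
    · exact hB2 i i' hij hij' (by linear_combination -h)
  have hfunit : ∀ i, IsUnit (f i) := by
    intro i
    rcases hf i with ⟨h, _⟩ | ⟨h, _⟩ <;> rw [h]
    · exact hUpow i
    · exact (hUpow i).neg
  set Pe : Finset (ZMod m) := (range (j+1)).image f with hPedef
  have hmemPe : ∀ a : ZMod m, a ∈ Pe ↔ ∃ i, i ∈ range (j+1) ∧ a = f i := by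
    intro a
    simp only [hPedef, mem_image]
    constructor
    · rintro ⟨i, hi, rfl⟩; exact ⟨i, hi, rfl⟩
    · rintro ⟨i, hi, rfl⟩; exact ⟨i, hi, rfl⟩
  have hPenotP : ∀ a ∈ Pe, a ∉ Q := by
    intro a ha haQ
    obtain ⟨i, hi, rfl⟩ := (hmemPe a).mp ha
    have hij : i ≤ j := by have := mem_range.mp hi; omega
    have h2P : (2:ZMod m) ^ i ∈ P := (hmemP _).mpr ⟨i, hij, rfl⟩
    rcases hf i with ⟨h, _⟩ | ⟨h, _⟩
    · exact (hQ1 _ haQ).2.1 (by rw [h]; exact h2P)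
    · refine (hQ1 _ haQ).2.2 ?_
      rw [h, neg_neg]
      exact h2P
  have hdisj : Disjoint Pe Q := by
    rw [Finset.disjoint_left]
    exact hPenotP
  refine ⟨Pe ∪ Q, ?_, ?_, ?_, ?_⟩
  · intro a ha
    rcases Finset.mem_union.mp ha with h | h
    · obtain ⟨i, _, rfl⟩ := (hmemPe a).mp h
      exact hfunit i
    · exact (hQ1 a h).1
  · intro a ha b hb
    rcases Finset.mem_union.mp ha with h | h <;> rcases Finset.mem_union.mp hb with h' | h'
    · obtain ⟨i, hi, rfl⟩ := (hmemPe a).mp h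
      obtain ⟨i', hi', rfl⟩ := (hmemPe b).mp h'
      exact hfadd i hi i' hi'
    · -- a ∈ Pe, b ∈ Q
      obtain ⟨i, hi, rfl⟩ := (hmemPe a).mp h
      intro hab
      have hij : i ≤ j := by have := mem_range.mp hi; omega
      have h2P : (2:ZMod m) ^ i ∈ P := (hmemP _).mpr ⟨i, hij, rfl⟩
      rcases hf i with ⟨hfi, _⟩ | ⟨hfi, _⟩
      · refine (hQ1 b h').2.2 ?_
        have : -b = (2:ZMod m) ^ i := by rw [← hfi]; linear_combination -hab
        rw [this]; exact h2P
      · refine (hQ1 b h').2.1 ?_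
        have : b = (2:ZMod m) ^ i := by rw [hfi] at hab; linear_combination hab
        rw [this]; exact h2P
    · -- a ∈ Q, b ∈ Pe
      obtain ⟨i, hi, rfl⟩ := (hmemPe b).mp h'
      intro hab
      have hij : i ≤ j := by have := mem_range.mp hi; omega
      have h2P : (2:ZMod m) ^ i ∈ P := (hmemP _).mpr ⟨i, hij, rfl⟩
      rcases hf i with ⟨hfi, _⟩ | ⟨hfi, _⟩
      · refine (hQ1 a h).2.2 ?_
        have : -a = (2:ZMod m) ^ i := by rw [← hfi]; linear_combination -hab
        rw [this]; exact h2P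
      · refine (hQ1 a h).2.1 ?_
        have : a = (2:ZMod m) ^ i := by rw [hfi] at hab; linear_combination hab
        rw [this]; exact h2P
    · exact hQ2 a h b h'
  · intro u hu
    by_cases huP : u ∈ P
    · obtain ⟨i, hij, rfl⟩ := (hmemP u).mp huP
      have hi : i ∈ range (j+1) := mem_range.mpr (by omega)
      rcases hf i with ⟨hfi, _⟩ | ⟨hfi, _⟩
      · left
        exact Finset.mem_union_left _ ((hmemPe _).mpr ⟨i, hi, hfi.symm⟩)
      · right
        exact Finset.mem_union_left _ ((hmemPe _).mpr ⟨i, hi, by rw [hfi]⟩)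
    · by_cases huP' : -u ∈ P
      · obtain ⟨i, hij, hi2⟩ := (hmemP (-u)).mp huP'
        have hi : i ∈ range (j+1) := mem_range.mpr (by omega)
        rcases hf i with ⟨hfi, _⟩ | ⟨hfi, _⟩
        · right
          exact Finset.mem_union_left _ ((hmemPe _).mpr ⟨i, hi, by rw [hfi, ← hi2]⟩)
        · left
          refine Finset.mem_union_left _ ((hmemPe _).mpr ⟨i, hi, ?_⟩)
          rw [hfi, ← hi2, neg_neg]
      · rcases hQ3 u hu huP huP' with h | h
        · exact Or.inl (Finset.mem_union_right _ h)
        · exact Or.inr (Finset.mem_union_right _ h)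
  · rw [Finset.sum_union hdisj]
    have hPe_sum : ∑ a ∈ Pe, a = t := by
      rw [hPedef, Finset.sum_image hfinj]
      exact hcov
    rw [hPe_sum, htdef]
    ring

private lemma card_half (m : ℕ) (h1 : 1 < m) (A : Finset (ZMod m))
    (hAu : ∀ a ∈ A, IsUnit a) (hAadd : ∀ a ∈ A, ∀ b ∈ A, a + b ≠ 0)
    (hAc : ∀ u : ZMod m, IsUnit u → u ∈ A ∨ -u ∈ A) :
    A.card = m.totient / 2 := by
  classical
  haveI : NeZero m := ⟨by omega⟩
  set U : Finset (ZMod m) := univ.filter (fun a => IsUnit a) with hU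
  have hUcard : U.card = m.totient := by
    have e : (ZMod m)ˣ ≃ {a : ZMod m // IsUnit a} :=
      { toFun := fun u => ⟨u, u.isUnit⟩
        invFun := fun a => a.2.unit
        left_inv := fun u => Units.ext (IsUnit.unit_spec _)
        right_inv := fun a => Subtype.ext (IsUnit.unit_spec a.2) }
    calc U.card = Fintype.card {a : ZMod m // IsUnit a} := (Fintype.card_subtype _).symm
      _ = Fintype.card (ZMod m)ˣ := (Fintype.card_congr e).symm
      _ = m.totient := ZMod.card_units_eq_totient m
  have hdisj : Disjoint A (A.image (fun a => -a)) := by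
    rw [Finset.disjoint_left]
    intro x hx hx'
    obtain ⟨b, hb, hbx⟩ := Finset.mem_image.mp hx'
    exact hAadd x hx b hb (by rw [← hbx]; ring)
  have hunion : A ∪ A.image (fun a => -a) = U := by
    ext x
    simp only [hU, Finset.mem_union, Finset.mem_image, Finset.mem_filter, Finset.mem_univ,
      true_and]
    constructor
    · rintro (hx | ⟨b, hb, rfl⟩)
      · exact hAu x hx
      · exact (hAu b hb).neg
    · intro hx
      rcases hAc x hx with h | h
      · exact Or.inl h
      · exact Or.inr ⟨-x, h, neg_neg x⟩
  have hcard := Finset.card_union_of_disjoint hdisj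
  rw [hunion, hUcard, Finset.card_image_of_injective _ neg_injective] at hcard
  omega

theorem Phi_subset_Delta (m : ℕ) (hm : Odd m) (h1 : 1 < m) :
    Phi m ⊆ Delta m := by
  classical
  intro ζ hζ
  haveI : NeZero m := ⟨by omega⟩
  haveI : Fact (1 < m) := ⟨h1⟩
  have hζ' : IsPrimitiveRoot ζ m := hζ
  obtain ⟨A, hAu, hAadd, hAc, hAsum⟩ := exists_rep m hm h1
  have hAcard : A.card = m.totient / 2 := card_half m h1 A hAu hAadd hAc
  have hcop : ∀ a : ZMod m, IsUnit a → Nat.Coprime a.val m := by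
    intro a ha
    obtain ⟨u, rfl⟩ := ha
    exact ZMod.val_coe_unit_coprime u
  have hinj : ∀ a ∈ A, ∀ b ∈ A, ζ ^ a.val = ζ ^ b.val → a = b := by
    intro a _ b _ h
    have := hζ'.pow_inj (ZMod.val_lt a) (ZMod.val_lt b) h
    have h2 := congrArg (fun k : ℕ => ((k : ℕ) : ZMod m)) this
    simpa [ZMod.natCast_zmod_val] using h2
  refine ⟨A.image (fun a => ζ ^ a.val), ?_, ?_, ?_, ?_⟩
  · intro x hx
    simp only [Finset.coe_image, Set.mem_image, Finset.mem_coe] at hx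
    obtain ⟨a, ha, rfl⟩ := hx
    exact hζ'.pow_of_coprime a.val (hcop a (hAu a ha))
  · rw [Finset.card_image_of_injOn hinj, hAcard]
  · intro x hx y hy hxy
    obtain ⟨a, ha, rfl⟩ := Finset.mem_image.mp hx
    obtain ⟨b, hb, rfl⟩ := Finset.mem_image.mp hy
    rw [← pow_add] at hxy
    have hdvd : m ∣ a.val + b.val := (hζ'.pow_eq_one_iff_dvd _).mp hxy
    have hz : ((a.val + b.val : ℕ) : ZMod m) = 0 :=
      (ZMod.natCast_eq_zero_iff _ _).mpr hdvd
    push_cast [ZMod.natCast_zmod_val] at hz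
    exact hAadd a ha b hb hz
  · rw [Finset.prod_image hinj, Finset.prod_pow_eq_pow_sum]
    have hcast : ((∑ a ∈ A, a.val : ℕ) : ZMod m) = ((1 : ℕ) : ZMod m) := by
      push_cast [ZMod.natCast_zmod_val]
      simpa using hAsum
    have hmod : (∑ a ∈ A, a.val) ≡ 1 [MOD m] := (ZMod.natCast_eq_natCast_iff _ _ _).mp hcast
    have hN : (∑ a ∈ A, a.val) % m = 1 := by
      have h := hmod
      unfold Nat.ModEq at h
      rwa [Nat.mod_eq_of_lt h1] at h
    obtain ⟨k, hk⟩ : ∃ k, (∑ a ∈ A, a.val) = m * k + 1 := by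
      have h := Nat.div_add_mod (∑ a ∈ A, a.val) m
      exact ⟨(∑ a ∈ A, a.val) / m, by omega⟩
    rw [hk, pow_add, pow_mul, hζ'.pow_eq_one, one_pow, one_mul, pow_one]
end

section
/- Let m > 1 be an odd natural number with k = φ(m). Then every m-th root of unity other than 1 lies in Δ(m); that is, for every ζ ∈ R(m) with ζ ≠ 1 there exist η₁, …, η_{k/2} ∈ Φ(m) such that η₁^{±1}, …, η_{k/2}^{±1} are pairwise distinct and η₁⋯η_{k/2} = ζ. -/
open scoped Pointwise

namespace DeltaAux


/-- The units of `ZMod m` in `(0, m/2)`, as naturals. -/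
def AA (m : ℕ) : Finset ℕ := (Finset.range m).filter (fun a => Nat.Coprime a m ∧ 2 * a < m)

lemma mem_AA {m a : ℕ} : a ∈ AA m ↔ a < m ∧ Nat.Coprime a m ∧ 2 * a < m := by
  simp [AA, Finset.mem_filter]

lemma AA_pos {m a : ℕ} (h1 : 1 < m) (ha : a ∈ AA m) : 0 < a := by
  rcases mem_AA.mp ha with ⟨_, hc, _⟩
  rcases Nat.eq_zero_or_pos a with rfl | h
  · simp [Nat.Coprime] at hc; omega
  · exact h

lemma sum_two_pow (k : ℕ) : ∑ i ∈ Finset.range k, 2 ^ i = 2 ^ k - 1 := by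
  induction k with
  | zero => simp
  | succ n ih =>
    have h : 1 ≤ 2 ^ n := Nat.one_le_two_pow
    rw [Finset.sum_range_succ, ih, pow_succ]
    omega

lemma pow2_mem_AA {m : ℕ} (hm : Odd m) {a i : ℕ} (ha : a ∈ AA m) (hi : 2 ^ i < a) :
    2 ^ i ∈ AA m := by
  rcases mem_AA.mp ha with ⟨h1, _, h2⟩
  refine mem_AA.mpr ⟨by omega, ?_, by omega⟩
  exact Nat.Coprime.pow_left _ (Nat.coprime_two_left.mpr hm)

lemma AA_cond {m : ℕ} (hm : Odd m) (h1 : 1 < m) :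
    ∀ a ∈ AA m, a ≤ 1 + ∑ b ∈ (AA m).filter (· < a), b := by
  intro a ha
  have hapos : 0 < a := AA_pos h1 ha
  set k := Nat.clog 2 a with hk
  have hsub : (Finset.range k).image (2 ^ ·) ⊆ (AA m).filter (· < a) := by
    intro x hx
    simp only [Finset.mem_image, Finset.mem_range] at hx
    obtain ⟨i, hi, rfl⟩ := hx
    have h2i : 2 ^ i < a := (Nat.lt_clog_iff_pow_lt one_lt_two).mp hi
    exact Finset.mem_filter.mpr ⟨pow2_mem_AA hm ha h2i, h2i⟩
  have hinj : Set.InjOn (2 ^ ·) (Finset.range k) :=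
    fun x _ y _ h => Nat.pow_right_injective le_rfl h
  have hsum : ∑ b ∈ (Finset.range k).image (2 ^ ·), b = 2 ^ k - 1 := by
    rw [Finset.sum_image (fun x hx y hy h => hinj hx hy h)]
    exact sum_two_pow k
  have hle : 2 ^ k - 1 ≤ ∑ b ∈ (AA m).filter (· < a), b := by
    rw [← hsum]
    exact Finset.sum_le_sum_of_subset hsub
  have hak : a ≤ 2 ^ k := Nat.le_pow_clog one_lt_two a
  have : 1 ≤ 2 ^ k := Nat.one_le_two_pow
  omega

/-- Subset sums of a finset satisfying the "complete sequence" condition cover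
the whole interval `[0, total]`. -/
lemma cover (F : Finset ℕ) (hF : ∀ a ∈ F, a ≤ 1 + ∑ b ∈ F.filter (· < a), b) :
    ∀ n ≤ ∑ b ∈ F, b, ∃ B ⊆ F, ∑ b ∈ B, b = n := by
  induction F using Finset.strongInduction with
  | _ F ih =>
    intro n hn
    rcases F.eq_empty_or_nonempty with rfl | hne
    · simp only [Finset.sum_empty, Nat.le_zero] at hn
      exact ⟨∅, Finset.Subset.refl _, by simp [hn]⟩
    · set M := F.max' hne with hM
      have hMF : M ∈ F := F.max'_mem hne
      set F' := F.erase M with hF'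
      have hss : F' ⊂ F := Finset.erase_ssubset hMF
      have hfilt : ∀ a ∈ F, F'.filter (· < a) = F.filter (· < a) := by
        intro a haF
        rw [hF', Finset.filter_erase]
        apply Finset.erase_eq_of_notMem
        simp only [Finset.mem_filter, not_and]
        intro _
        exact not_lt.mpr (F.le_max' a haF)
      have hcond' : ∀ a ∈ F', a ≤ 1 + ∑ b ∈ F'.filter (· < a), b := by
        intro a ha
        rw [hfilt a (Finset.mem_of_mem_erase ha)]
        exact hF a (Finset.mem_of_mem_erase ha)
      have hsplit : ∑ b ∈ F', b + M = ∑ b ∈ F, b := Finset.sum_erase_add F _ hMF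
      rcases le_or_gt n (∑ b ∈ F', b) with hle | hgt
      · obtain ⟨B, hB, hs⟩ := ih F' hss hcond' n hle
        exact ⟨B, hB.trans (Finset.erase_subset _ _), hs⟩
      · have hMsum : M ≤ 1 + ∑ b ∈ F', b := by
          have := hF M hMF
          have hsub2 : F.filter (· < M) ⊆ F' := by
            intro x hx
            rcases Finset.mem_filter.mp hx with ⟨hxF, hxlt⟩
            exact Finset.mem_erase.mpr ⟨by omega, hxF⟩
          have hs2 : ∑ b ∈ F.filter (· < M), b ≤ ∑ b ∈ F', b :=
            Finset.sum_le_sum_of_subset hsub2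
          omega
        have h1 : n - M ≤ ∑ b ∈ F', b := by omega
        have h2 : M ≤ n := by omega
        obtain ⟨B, hB, hs⟩ := ih F' hss hcond' (n - M) h1
        have hMB : M ∉ B := fun h => (Finset.mem_erase.mp (hB h)).1 rfl
        refine ⟨insert M B, ?_, ?_⟩
        · intro x hx
          rcases Finset.mem_insert.mp hx with rfl | hx
          · exact hMF
          · exact Finset.mem_of_mem_erase (hB hx)
        · rw [Finset.sum_insert hMB, hs]; omega


lemma half_mem_AA {m : ℕ} (hm : Odd m) (h1 : 1 < m) : m / 2 ∈ AA m := by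
  obtain ⟨r, rfl⟩ := hm
  have hr : (2 * r + 1) / 2 = r := by omega
  rw [hr]
  refine mem_AA.mpr ⟨by omega, ?_, by omega⟩
  have : Nat.Coprime r (1 + r * 2) := (Nat.coprime_add_mul_left_right r 1 2).mpr (Nat.coprime_one_right r)
  simpa [Nat.add_comm, Nat.mul_comm] using this

lemma sum_AA_ge {m : ℕ} (hm : Odd m) (h1 : 1 < m) : m - 2 ≤ ∑ b ∈ AA m, b := by
  set r := m / 2 with hrdef
  have hmr : m = 2 * r + 1 := by
    obtain ⟨t, ht⟩ := hm; omega
  have hr1 : 1 ≤ r := by omega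
  set k := Nat.clog 2 (r + 1) with hk
  set P := (Finset.range k).image (2 ^ ·) with hP
  have hPsub : P ⊆ AA m := by
    intro x hx
    simp only [hP, Finset.mem_image, Finset.mem_range] at hx
    obtain ⟨i, hi, rfl⟩ := hx
    have h2i : 2 ^ i < r + 1 := (Nat.lt_clog_iff_pow_lt one_lt_two).mp hi
    refine mem_AA.mpr ⟨by omega, ?_, by omega⟩
    exact Nat.Coprime.pow_left _ (Nat.coprime_two_left.mpr hm)
  have hinj : ∀ x ∈ Finset.range k, ∀ y ∈ Finset.range k, 2 ^ x = 2 ^ y → x = y :=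
    fun x _ y _ h => Nat.pow_right_injective le_rfl h
  have hPsum : ∑ b ∈ P, b = 2 ^ k - 1 := by
    rw [hP, Finset.sum_image hinj]
    induction k with
    | zero => simp
    | succ n ih =>
      have h : 1 ≤ 2 ^ n := Nat.one_le_two_pow
      rw [Finset.sum_range_succ, ih, pow_succ]
      omega
  have hkr : r + 1 ≤ 2 ^ k := Nat.le_pow_clog one_lt_two _
  by_cases hrP : r ∈ P
  · -- r is a power of two, P already has sum ≥ 2r - 1
    simp only [hP, Finset.mem_image, Finset.mem_range] at hrP
    obtain ⟨s, hs, hrs⟩ := hrP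
    have hsk : s < k := hs
    have h2k : 2 * r ≤ 2 ^ k := by
      have h1' : 2 * r = 2 ^ (s + 1) := by rw [← hrs]; ring
      have h2' : (2:ℕ) ^ (s + 1) ≤ 2 ^ k := Nat.pow_le_pow_right (by omega) (by omega)
      omega
    have hPle : ∑ b ∈ P, b ≤ ∑ b ∈ AA m, b := Finset.sum_le_sum_of_subset hPsub
    omega
  · have hrAA : r ∈ AA m := hrdef ▸ half_mem_AA hm h1
    have hsub : insert r P ⊆ AA m := by
      intro x hx
      rcases Finset.mem_insert.mp hx with rfl | hx
      · exact hrAA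
      · exact hPsub hx
    have hins : ∑ b ∈ insert r P, b = r + (2 ^ k - 1) := by
      rw [Finset.sum_insert hrP, hPsum]
    have hIle : ∑ b ∈ insert r P, b ≤ ∑ b ∈ AA m, b := Finset.sum_le_sum_of_subset hsub
    omega

lemma card_AA {m : ℕ} (hm : Odd m) (h1 : 1 < m) : 2 * (AA m).card = Nat.totient m := by
  have hU : Nat.totient m = ((Finset.range m).filter m.Coprime).card :=
    Nat.totient_eq_card_coprime m
  set A' := (AA m).image (fun a => m - a) with hA'
  have hinj : Set.InjOn (fun a => m - a) (AA m) := by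
    intro x hx y hy h
    have hx' := mem_AA.mp hx
    have hy' := mem_AA.mp hy
    simp only at h
    omega
  have hcardA' : A'.card = (AA m).card := Finset.card_image_of_injOn hinj
  have hdisj : Disjoint (AA m) A' := by
    rw [Finset.disjoint_left]
    intro x hx hx'
    rcases mem_AA.mp hx with ⟨_, _, h2x⟩
    simp only [hA', Finset.mem_image] at hx'
    obtain ⟨a, ha, rfl⟩ := hx'
    rcases mem_AA.mp ha with ⟨ham, hac, h2a⟩
    have : 0 < a := by
      rcases Nat.eq_zero_or_pos a with rfl | h
      · simp [Nat.Coprime] at hac; omega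
      · exact h
    omega
  have hunion : (Finset.range m).filter m.Coprime = AA m ∪ A' := by
    ext x
    simp only [Finset.mem_filter, Finset.mem_range, Finset.mem_union, hA', Finset.mem_image]
    constructor
    · rintro ⟨hxm, hxc⟩
      have hxc' : Nat.Coprime x m := hxc.symm
      have hx0 : 0 < x := by
        rcases Nat.eq_zero_or_pos x with rfl | h
        · simp [Nat.Coprime] at hxc'; omega
        · exact h
      have hx2 : 2 * x ≠ m := by
        obtain ⟨t, ht⟩ := hm; omega
      rcases lt_or_gt_of_ne hx2 with hlt | hgt
      · exact Or.inl (mem_AA.mpr ⟨hxm, hxc', hlt⟩)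
      · refine Or.inr ⟨m - x, mem_AA.mpr ⟨by omega, ?_, by omega⟩, by omega⟩
        -- Coprime (m - x) m
        have h1' : Nat.Coprime (m - x) x := (Nat.coprime_sub_self_left (le_of_lt hxm)).mpr hxc'.symm
        have : Nat.Coprime (m - x) (x + (m - x)) := by
          rw [Nat.coprime_add_self_right]
          exact h1'
        rwa [Nat.add_sub_cancel' (le_of_lt hxm)] at this
    · rintro (hx | ⟨a, ha, rfl⟩)
      · rcases mem_AA.mp hx with ⟨hxm, hxc, _⟩
        exact ⟨hxm, hxc.symm⟩
      · rcases mem_AA.mp ha with ⟨ham, hac, h2a⟩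
        have ha0 : 0 < a := by
          rcases Nat.eq_zero_or_pos a with rfl | h
          · simp [Nat.Coprime] at hac; omega
          · exact h
        refine ⟨by omega, ?_⟩
        have h1' : Nat.Coprime (m - a) a := (Nat.coprime_sub_self_left (le_of_lt ham)).mpr hac.symm
        have h2' : Nat.Coprime (m - a) (a + (m - a)) := by
          rw [Nat.coprime_add_self_right]; exact h1'
        rw [Nat.add_sub_cancel' (le_of_lt ham)] at h2'
        exact h2'.symm
  rw [hU, hunion, Finset.card_union_of_disjoint hdisj, hcardA']
  ring


lemma exists_B {m : ℕ} (hm : Odd m) (h1 : 1 < m) {c : ℕ} (hc0 : 0 < c) (hcm : c < m) :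
    ∃ B ⊆ AA m, 2 * (∑ b ∈ B, b) + c ≡ (∑ b ∈ AA m, b) [MOD m] := by
  set T := ∑ b ∈ AA m, b with hT
  have hTm : m - 2 ≤ T := sum_AA_ge hm h1
  obtain ⟨r, hr⟩ := hm
  set z := m - c with hz
  set X := (r + 1) * (T + z) with hX
  set S := X % m with hS
  have hSm : S < m := Nat.mod_lt _ (by omega)
  have key : 2 * X + c = m * (T + z) + (T + m) := by
    have e1 : 2 * X = (m + 1) * (T + z) := by
      rw [hX, ← mul_assoc]
      congr 1
      omega
    have e2 : (m + 1) * (T + z) = m * (T + z) + (T + z) := by ring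
    set Q := m * (T + z) with hQ
    omega
  have hXS : S ≡ X [MOD m] := Nat.mod_modEq X m
  have hc1 : 2 * S + c ≡ 2 * X + c [MOD m] := (hXS.mul_left 2).add_right c
  have hc2 : m * (T + z) + (T + m) ≡ T [MOD m] := by
    have d1 : m * (T + z) ≡ 0 [MOD m] := Nat.modEq_zero_iff_dvd.mpr ⟨T + z, rfl⟩
    have d2 : T + m ≡ T + 0 [MOD m] :=
      Nat.ModEq.add_left T (Nat.modEq_zero_iff_dvd.mpr dvd_rfl)
    calc m * (T + z) + (T + m) ≡ 0 + (T + 0) [MOD m] := d1.add d2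
    _ = T := by omega
  have hc3 : 2 * S + c ≡ T [MOD m] := by
    rw [key] at hc1
    exact hc1.trans hc2
  rcases le_or_gt S T with hle | hgt
  · obtain ⟨B, hB, hBs⟩ := cover (AA m) (AA_cond (⟨r, hr⟩ : Odd m) h1) S hle
    exact ⟨B, hB, by rw [hBs]; exact hc3⟩
  · exfalso
    have hSe : S = m - 1 ∧ T = m - 2 := by omega
    obtain ⟨hS1, hT1⟩ := hSe
    rw [hS1, hT1] at hc3
    have e3 : 2 * (m - 1) + c = m + ((m - 2) + c) := by omega
    have hc4 : m + ((m - 2) + c) ≡ (m - 2) + 0 [MOD m] := by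
      rw [← e3, Nat.add_zero]
      exact hc3
    have hc5 : (m - 2) + c ≡ (m - 2) + 0 [MOD m] := by
      have d3 : m + ((m - 2) + c) ≡ 0 + ((m - 2) + c) [MOD m] :=
        Nat.ModEq.add_right _ (Nat.modEq_zero_iff_dvd.mpr dvd_rfl)
      have := (d3.symm.trans hc4)
      rwa [Nat.zero_add] at this
    have hc6 : c ≡ 0 [MOD m] := Nat.ModEq.add_left_cancel' _ hc5
    have := Nat.modEq_zero_iff_dvd.mp hc6
    have := Nat.le_of_dvd hc0 this
    omega


end DeltaAux

namespace DeltaAux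
lemma pow_eq_pow_of_modEq {ζ : ℂ} {n : ℕ} (h : IsPrimitiveRoot ζ n) {i j : ℕ}
    (hij : i ≡ j [MOD n]) : ζ ^ i = ζ ^ j := by
  have hmod : i % n = j % n := hij
  have hζ1 : ζ ^ n = 1 := h.pow_eq_one
  rw [← Nat.div_add_mod i n, ← Nat.div_add_mod j n, pow_add, pow_add, pow_mul, pow_mul,
    hζ1, one_pow, one_pow, hmod]

lemma coprime_sub {m a : ℕ} (ham : a < m) (hac : Nat.Coprime a m) :
    Nat.Coprime (m - a) m := by
  have h1' : Nat.Coprime (m - a) a := (Nat.coprime_sub_self_left (le_of_lt ham)).mpr hac.symm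
  have h2' : Nat.Coprime (m - a) (a + (m - a)) := by
    rw [Nat.coprime_add_self_right]; exact h1'
  rwa [Nat.add_sub_cancel' (le_of_lt ham)] at h2'


end DeltaAux

open DeltaAux

theorem R_sdiff_one_subset_Delta (m : ℕ) (hm : Odd m) (h1 : 1 < m) :
    Rset m \ {1} ⊆ Delta m := by
  intro ζ hζ
  obtain ⟨hζR, hζ1⟩ := hζ
  have hζR' : ζ ^ m = 1 := hζR
  have hζ1' : ζ ≠ 1 := by simpa using hζ1
  have hm0 : m ≠ 0 := by omega
  haveI : NeZero m := ⟨hm0⟩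
  have hξ : IsPrimitiveRoot (Complex.exp (2 * Real.pi * Complex.I / m)) m :=
    Complex.isPrimitiveRoot_exp m hm0
  set ξ := Complex.exp (2 * Real.pi * Complex.I / m) with hξdef
  obtain ⟨c, hcm, hceq⟩ := hξ.eq_pow_of_pow_eq_one hζR'
  have hc0 : 0 < c := by
    rcases Nat.eq_zero_or_pos c with rfl | h
    · rw [pow_zero] at hceq
      exact absurd hceq.symm hζ1'
    · exact h
  obtain ⟨B, hB, hcong⟩ := exists_B hm h1 hc0 hcm
  set f : ℕ → ℕ := fun a => if a ∈ B then m - a else a with hf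
  have hfbound : ∀ a ∈ AA m, 0 < f a ∧ f a < m ∧ Nat.Coprime (f a) m := by
    intro a ha
    rcases mem_AA.mp ha with ⟨ham, hac, h2a⟩
    have ha0 : 0 < a := AA_pos h1 ha
    by_cases hmem : a ∈ B <;> simp only [hf, hmem, if_true, if_false]
    · exact ⟨by omega, by omega, coprime_sub ham hac⟩
    · exact ⟨ha0, ham, hac⟩
  have hfinj : ∀ x ∈ AA m, ∀ y ∈ AA m, ξ ^ f x = ξ ^ f y → x = y := by
    intro x hx y hy hxy
    have hfx := hfbound x hx
    have hfy := hfbound y hy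
    have hfe : f x = f y := hξ.pow_inj hfx.2.1 hfy.2.1 hxy
    rcases mem_AA.mp hx with ⟨hxm, _, h2x⟩
    rcases mem_AA.mp hy with ⟨hym, _, h2y⟩
    by_cases hx' : x ∈ B <;> by_cases hy' : y ∈ B <;>
      simp only [hf, hx', hy', if_true, if_false] at hfe <;> omega
  set s : Finset ℂ := (AA m).image (fun a => ξ ^ f a) with hs
  have hcard : s.card = Nat.totient m / 2 := by
    rw [hs, Finset.card_image_of_injOn (fun x hx y hy h => hfinj x hx y hy h)]
    have := card_AA hm h1
    omega
  have hs1 : ↑s ⊆ Phi m := by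
    intro z hz
    simp only [hs, Finset.coe_image, Set.mem_image, Finset.mem_coe] at hz
    obtain ⟨a, ha, rfl⟩ := hz
    exact hξ.pow_of_coprime _ (hfbound a ha).2.2
  have hs2 : ∀ x ∈ s, ∀ y ∈ s, x * y ≠ 1 := by
    intro x hx y hy hxy
    simp only [hs, Finset.mem_image] at hx hy
    obtain ⟨a, ha, rfl⟩ := hx
    obtain ⟨b, hb, rfl⟩ := hy
    rw [← pow_add] at hxy
    have hdvd : m ∣ f a + f b := (hξ.pow_eq_one_iff_dvd _).mp hxy
    have hfa := hfbound a ha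
    have hfb := hfbound b hb
    have heq : f a + f b = m := by
      rcases hdvd with ⟨k, hk⟩
      have hk1 : k = 1 := by
        rcases Nat.lt_or_ge k 1 with h | h
        · interval_cases k
          · omega
        · rcases Nat.lt_or_ge k 2 with h' | h'
          · omega
          · have : m * 2 ≤ m * k := Nat.mul_le_mul_left m h'
            omega
      rw [hk1, Nat.mul_one] at hk
      omega
    rcases mem_AA.mp ha with ⟨ham, _, h2a⟩
    rcases mem_AA.mp hb with ⟨hbm, _, h2b⟩
    by_cases ha' : a ∈ B <;> by_cases hb' : b ∈ B <;>
        simp only [hf, ha', hb', if_true, if_false] at heq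
    · omega
    · have : a = b := by omega
      exact hb' (this ▸ ha')
    · have : a = b := by omega
      exact ha' (this ▸ hb')
    · omega
  have hprod : ∏ x ∈ s, x = ζ := by
    rw [hs, Finset.prod_image (fun x hx y hy h => hfinj x hx y hy h)]
    rw [Finset.prod_pow_eq_pow_sum]
    rw [← hceq]
    apply pow_eq_pow_of_modEq hξ
    have hsd1 : ∑ a ∈ AA m \ B, f a + ∑ a ∈ B, f a = ∑ a ∈ AA m, f a := Finset.sum_sdiff hB
    have hsd2 : ∑ a ∈ AA m \ B, a + ∑ a ∈ B, a = ∑ a ∈ AA m, a := Finset.sum_sdiff hB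
    have hfid : ∑ a ∈ AA m \ B, f a = ∑ a ∈ AA m \ B, a := by
      apply Finset.sum_congr rfl
      intro a ha
      have := (Finset.mem_sdiff.mp ha).2
      simp only [hf, this, if_false]
    have hfB : ∑ a ∈ B, f a + ∑ a ∈ B, a = m * B.card := by
      rw [← Finset.sum_add_distrib]
      have hc' : ∀ a ∈ B, f a + a = m := by
        intro a ha
        have haA := hB ha
        have hup := (hfbound a haA).2.1
        have ha0 := AA_pos h1 haA
        have ham := (mem_AA.mp haA).1
        simp only [hf, ha, if_true]
        omega
      rw [Finset.sum_congr rfl hc', Finset.sum_const, smul_eq_mul]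
      ring
    have hkey : ∑ a ∈ AA m, f a + 2 * ∑ a ∈ B, a = m * B.card + ∑ a ∈ AA m, a := by
      set Q := m * B.card with hQ
      omega
    have hmod1 : ∑ a ∈ AA m, f a + 2 * ∑ a ∈ B, a ≡ ∑ a ∈ AA m, a [MOD m] := by
      rw [hkey]
      have d1 : m * B.card ≡ 0 [MOD m] := Nat.modEq_zero_iff_dvd.mpr ⟨B.card, rfl⟩
      have := d1.add_right (∑ a ∈ AA m, a)
      rwa [Nat.zero_add] at this
    have hmod2 : 2 * ∑ a ∈ B, a + ∑ a ∈ AA m, f a ≡ 2 * ∑ a ∈ B, a + c [MOD m] := by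
      have := hmod1.trans hcong.symm
      rwa [Nat.add_comm (∑ a ∈ AA m, f a)] at this
    exact Nat.ModEq.add_left_cancel' _ hmod2
  exact ⟨s, hs1, hcard, hs2, hprod⟩
end
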